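/- arXiv:1710.06082 — 6 statements merged into one kernel-verified Lean document; each statement's English description precedes it below -/
import Mathlib

section
/- Let d be a metric on ℕ satisfying the summability condition and let γ > 0. If M : ℕ × ℕ → ℝ belongs to the Jaffard class J(d,γ), then the matrix |M| with entries |M_{ij}| induces a bounded operator on ℓ²; in particular M itself induces a bounded operator on ℓ². -/
/-! Jaffard decay dominates `|M|` entrywise by the symmetric kernel `K i j = C e^{-γ' d(i,j)}`,
whose row (hence column) sums are uniformly bounded by the summability condition, so Schur's test
applies: Cauchy–Schwarz with weights `K i j` gives `(Mx)_i² ≤ R Σ_j K i j x_j²`, and summing over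
`i` and exchanging the sums gives `‖Mx‖² ≤ R T ‖x‖²` with `R`, `T` the row and column bounds. -/

abbrev Mat := ℕ → ℕ → ℝ

noncomputable def mulVec (M : Mat) (x : ℕ → ℝ) : ℕ → ℝ := fun i => ∑' j, M i j * x j

def Memℓ2 (x : ℕ → ℝ) : Prop := Summable fun i => x i ^ 2

noncomputable def l2norm (x : ℕ → ℝ) : ℝ := Real.sqrt (∑' i, x i ^ 2)

def BoundedWith (M : Mat) (K : ℝ) : Prop :=
  ∀ x : ℕ → ℝ, Memℓ2 x →
    (∀ i, Summable fun j => |M i j * x j|) ∧ Memℓ2 (mulVec M x) ∧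
      l2norm (mulVec M x) ≤ K * l2norm x

def IsBoundedOp (M : Mat) : Prop := ∃ K : ℝ, 0 ≤ K ∧ BoundedWith M K

def IsMetric (d : ℕ → ℕ → ℝ) : Prop :=
  (∀ i j, 0 ≤ d i j) ∧ (∀ i j, d i j = 0 ↔ i = j) ∧ (∀ i j, d i j = d j i) ∧
    ∀ i j k, d i k ≤ d i j + d j k

/-- The summability condition `sup_i Σ_j exp(−ε d(i,j)) < ∞` for every `ε > 0`. -/
def SummCond (d : ℕ → ℕ → ℝ) : Prop :=
  ∀ ε : ℝ, 0 < ε → ∃ S : ℝ, ∀ i,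
    (Summable fun j => Real.exp (-ε * d i j)) ∧ (∑' j, Real.exp (-ε * d i j)) ≤ S

/-- Jaffard class `J(d,γ)`. -/
def Jaffard (d : ℕ → ℕ → ℝ) (γ : ℝ) (M : Mat) : Prop :=
  ∀ γ' : ℝ, 0 < γ' → γ' < γ → ∃ C : ℝ, 0 < C ∧ ∀ i j, |M i j| ≤ C * Real.exp (-γ' * d i j)

theorem sq_tsum_le_tsum_mul_tsum_of_sq_le_mul {ι : Type*} {r f g : ι → ℝ}
    (hr : ∀ i, 0 ≤ r i) (hf : ∀ i, 0 ≤ f i) (hg : ∀ i, 0 ≤ g i)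
    (hrfg : ∀ i, r i ^ 2 ≤ f i * g i) (hfs : Summable f) (hgs : Summable g) :
    Summable r ∧ (∑' i, r i) ^ 2 ≤ (∑' i, f i) * ∑' i, g i := by
  have hrs : Summable r := by
    refine .of_nonneg_of_le hr (fun i => ?_) ((hfs.add hgs).div_const 2)
    refine (pow_le_pow_iff_left₀ (hr i) (by linarith [hf i, hg i]) two_ne_zero).1 ?_
    nlinarith [hrfg i, sq_nonneg (f i - g i)]
  refine ⟨hrs, le_of_tendsto_of_tendsto' (hrs.hasSum.pow 2)
    (Filter.Tendsto.mul hfs.hasSum hgs.hasSum) fun s => ?_⟩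
  exact Finset.sum_sq_le_sum_mul_sum_of_sq_le_mul s (fun i _ => hf i) (fun i _ => hg i)
    fun i _ => hrfg i

theorem summable_tsum_and_tsum_comm_of_nonneg {α β : Type*} {f : α → β → ℝ}
    (hf : ∀ i j, 0 ≤ f i j) (hcol : ∀ j, Summable fun i => f i j)
    (hsum : Summable fun j => ∑' i, f i j) :
    (Summable fun i => ∑' j, f i j) ∧ ∑' i, ∑' j, f i j = ∑' j, ∑' i, f i j := by
  have h : Summable fun p : β × α => f p.2 p.1 :=
    (summable_prod_of_nonneg fun p => hf p.2 p.1).2 ⟨hcol, hsum⟩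
  exact ⟨h.prod_symm.prod, (h.prod_symm.tsum_comm (f := f)).symm⟩

section Schur

variable {M K : Mat} {R T : ℝ} {x : ℕ → ℝ}

theorem summable_kernel_mul_sq (hrow : ∀ i, Summable (K i)) (hK0 : ∀ i j, 0 ≤ K i j)
    (hrowR : ∀ i, ∑' j, K i j ≤ R) (hx : Memℓ2 x) (i : ℕ) :
    Summable fun j => K i j * x j ^ 2 :=
  .of_nonneg_of_le (fun j => mul_nonneg (hK0 i j) (sq_nonneg _))
    (fun j => mul_le_mul_of_nonneg_right
      (((hrow i).le_tsum j fun k _ => hK0 i k).trans (hrowR i)) (sq_nonneg _))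
    (hx.mul_left R)

theorem abs_mulVec_le_tsum (hK : ∀ i j, |M i j| ≤ K i j)
    {i : ℕ} (hKx : Summable fun j => K i j * |x j|) :
    (Summable fun j => |M i j * x j|) ∧ |mulVec M x i| ≤ ∑' j, K i j * |x j| := by
  have hle : ∀ j, |M i j * x j| ≤ K i j * |x j| := fun j => by
    rw [abs_mul]; exact mul_le_mul_of_nonneg_right (hK i j) (abs_nonneg _)
  have habs : Summable fun j => |M i j * x j| :=
    .of_nonneg_of_le (fun j => abs_nonneg _) hle hKx
  refine ⟨habs, ?_⟩
  calc |mulVec M x i| ≤ ∑' j, |M i j * x j| :=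
        norm_tsum_le_tsum_norm (f := fun j => M i j * x j) habs
    _ ≤ ∑' j, K i j * |x j| := habs.tsum_le_tsum hle hKx

theorem sq_mulVec_le (hK : ∀ i j, |M i j| ≤ K i j) (hrow : ∀ i, Summable (K i))
    (hrowR : ∀ i, ∑' j, K i j ≤ R) (hx : Memℓ2 x) (i : ℕ) :
    (Summable fun j => |M i j * x j|) ∧ mulVec M x i ^ 2 ≤ R * ∑' j, K i j * x j ^ 2 := by
  have hK0 : ∀ i j, 0 ≤ K i j := fun i j => (abs_nonneg _).trans (hK i j)
  obtain ⟨hKx, hcs⟩ := sq_tsum_le_tsum_mul_tsum_of_sq_le_mul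
    (r := fun j => K i j * |x j|) (fun j => mul_nonneg (hK0 i j) (abs_nonneg _)) (hK0 i)
    (fun j => mul_nonneg (hK0 i j) (sq_nonneg _))
    (fun j => le_of_eq (by rw [mul_pow, sq_abs]; ring))
    (hrow i) (summable_kernel_mul_sq hrow hK0 hrowR hx i)
  obtain ⟨habs, hle⟩ := abs_mulVec_le_tsum hK hKx
  refine ⟨habs, ?_⟩
  calc mulVec M x i ^ 2 = |mulVec M x i| ^ 2 := (sq_abs _).symm
    _ ≤ (∑' j, K i j * |x j|) ^ 2 := pow_le_pow_left₀ (abs_nonneg _) hle 2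
    _ ≤ (∑' j, K i j) * ∑' j, K i j * x j ^ 2 := hcs
    _ ≤ R * ∑' j, K i j * x j ^ 2 :=
      mul_le_mul_of_nonneg_right (hrowR i) (tsum_nonneg fun j => mul_nonneg (hK0 i j) (sq_nonneg _))

theorem tsum_tsum_kernel_mul_sq_le (hK0 : ∀ i j, 0 ≤ K i j) (hcol : ∀ j, Summable fun i => K i j)
    (hcolT : ∀ j, ∑' i, K i j ≤ T) (hx : Memℓ2 x) :
    (Summable fun i => ∑' j, K i j * x j ^ 2) ∧
      ∑' i, ∑' j, K i j * x j ^ 2 ≤ T * ∑' j, x j ^ 2 := by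
  have hcolx : ∀ j, ∑' i, K i j * x j ^ 2 ≤ T * x j ^ 2 := fun j => by
    rw [tsum_mul_right]; exact mul_le_mul_of_nonneg_right (hcolT j) (sq_nonneg _)
  have hcolx0 : ∀ j, 0 ≤ ∑' i, K i j * x j ^ 2 := fun j =>
    tsum_nonneg fun i => mul_nonneg (hK0 i j) (sq_nonneg _)
  have hsum : Summable fun j => ∑' i, K i j * x j ^ 2 :=
    .of_nonneg_of_le hcolx0 hcolx (hx.mul_left T)
  obtain ⟨hrows, hcomm⟩ := summable_tsum_and_tsum_comm_of_nonneg
    (fun i j => mul_nonneg (hK0 i j) (sq_nonneg (x j))) (fun j => (hcol j).mul_right _) hsum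
  refine ⟨hrows, ?_⟩
  rw [hcomm, ← tsum_mul_left]
  exact hsum.tsum_le_tsum hcolx (hx.mul_left T)

theorem boundedWith_of_abs_le_kernel (hK : ∀ i j, |M i j| ≤ K i j)
    (hrow : ∀ i, Summable (K i)) (hrowR : ∀ i, ∑' j, K i j ≤ R)
    (hcol : ∀ j, Summable fun i => K i j) (hcolT : ∀ j, ∑' i, K i j ≤ T) :
    BoundedWith M √(R * T) := by
  intro x hx
  have hK0 : ∀ i j, 0 ≤ K i j := fun i j => (abs_nonneg _).trans (hK i j)
  have hR : 0 ≤ R := (tsum_nonneg (hK0 0)).trans (hrowR 0)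
  obtain ⟨hb, hbT⟩ := tsum_tsum_kernel_mul_sq_le hK0 hcol hcolT hx
  have hMx := sq_mulVec_le hK hrow hrowR hx
  have hmem : Memℓ2 (mulVec M x) :=
    .of_nonneg_of_le (fun i => sq_nonneg _) (fun i => (hMx i).2) (hb.mul_left R)
  refine ⟨fun i => (hMx i).1, hmem, ?_⟩
  have hsq : ∑' i, mulVec M x i ^ 2 ≤ R * T * ∑' j, x j ^ 2 :=
    calc ∑' i, mulVec M x i ^ 2 ≤ ∑' i, R * ∑' j, K i j * x j ^ 2 :=
          hmem.tsum_le_tsum (fun i => (hMx i).2) (hb.mul_left R)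
      _ ≤ R * T * ∑' j, x j ^ 2 := by
          rw [tsum_mul_left, mul_assoc]; exact mul_le_mul_of_nonneg_left hbT hR
  unfold l2norm
  rw [← Real.sqrt_mul' _ (tsum_nonneg fun j => sq_nonneg _)]
  exact Real.sqrt_le_sqrt hsq

theorem isBoundedOp_of_abs_le_symm_kernel (hK : ∀ i j, |M i j| ≤ K i j)
    (hsymm : ∀ i j, K i j = K j i) (hrow : ∀ i, Summable (K i)) (hrowR : ∀ i, ∑' j, K i j ≤ R) :
    IsBoundedOp M :=
  ⟨_, Real.sqrt_nonneg _, boundedWith_of_abs_le_kernel (T := R) hK hrow hrowR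
    (fun j => (hrow j).congr fun i => hsymm j i)
    (fun j => (tsum_congr fun i => hsymm i j).trans_le (hrowR j))⟩

end Schur

/-- a matrix of Jaffard class induces a bounded operator on ℓ²,
and so does its entrywise absolute value. -/
theorem jaffard_bounded
    (d : ℕ → ℕ → ℝ) (hd : IsMetric d) (hsum : SummCond d)
    (γ : ℝ) (hγ : 0 < γ) (M : Mat) (hJ : Jaffard d γ M) :
    IsBoundedOp (fun i j => |M i j|) ∧ IsBoundedOp M := by
  obtain ⟨C, hC, hM⟩ := hJ (γ / 2) (half_pos hγ) (half_lt_self hγ)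
  obtain ⟨S, hS⟩ := hsum (γ / 2) (half_pos hγ)
  set K : Mat := fun i j => C * Real.exp (-(γ / 2) * d i j)
  have hsymm : ∀ i j, K i j = K j i := fun i j => by simp only [K, hd.2.2.1 i j]
  have hrow : ∀ i, Summable (K i) := fun i => (hS i).1.mul_left C
  have hrowS : ∀ i, ∑' j, K i j ≤ C * S := fun i => by
    rw [tsum_mul_left]; exact mul_le_mul_of_nonneg_left (hS i).2 hC.le
  exact ⟨isBoundedOp_of_abs_le_symm_kernel (fun i j => (abs_abs (M i j)).trans_le (hM i j))
      hsymm hrow hrowS,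
    isBoundedOp_of_abs_le_symm_kernel hM hsymm hrow hrowS⟩
end

section
/- Let d be a metric on ℕ satisfying the summability condition, γ > 0, and let M ∈ J(d,γ) induce a bounded operator on ℓ² which is elliptic with constant C_ell > 0. Then every finite section M_n := (M_{ij})_{1 ≤ i,j ≤ n} is invertible, the matrix M̄ defined by M̄_{ij} := sup_{n ≥ max{i,j}} |(M_n⁻¹)_{ij}| has finite entries, and there exists γ̃ > 0 (depending only on C_ell, d and γ) such that M̄ ∈ J(d, γ̃); in particular M̄ induces a bounded operator on ℓ². -/
/-- Ellipticity: `⟨Mx,x⟩ ≥ c‖x‖²` for all `x ∈ ℓ²`. -/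
def Elliptic (M : Mat) (c : ℝ) : Prop :=
  ∀ x : ℕ → ℝ, Memℓ2 x → c * (∑' i, x i ^ 2) ≤ ∑' i, mulVec M x i * x i

/-- The finite section `(M_{ij})_{i,j < N}` of an infinite matrix. -/
def sect (M : Mat) (N : ℕ) : Matrix (Fin N) (Fin N) ℝ := Matrix.of fun i j => M i j

/-- `M̄_{ij} := sup_{n > max{i,j}} |(M_n⁻¹)_{ij}|` (finite sections indexed so that
`i, j` are valid indices). -/
noncomputable def Mbar (M : Mat) : Mat := fun i j =>
  ⨆ k : {m : ℕ // max i j < m},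
    |(sect M k.1)⁻¹ ⟨i, lt_of_le_of_lt (le_max_left i j) k.2⟩
        ⟨j, lt_of_le_of_lt (le_max_right i j) k.2⟩|

open Real Filter Topology
open scoped Matrix.Norms.L2Operator RealInnerProductSpace

universe u

theorem abs_le_rpow_mul_rpow_of_abs_le {x a b θ : ℝ} (hθ₀ : 0 ≤ θ) (hθ₁ : θ ≤ 1)
    (ha : |x| ≤ a) (hb : |x| ≤ b) : |x| ≤ a ^ (1 - θ) * b ^ θ :=
  calc |x| = |x| ^ (1 - θ) * |x| ^ θ := by
        rw [← rpow_add' (abs_nonneg x) (by simp), sub_add_cancel, rpow_one]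
    _ ≤ a ^ (1 - θ) * b ^ θ :=
        mul_le_mul (rpow_le_rpow (abs_nonneg x) ha (by linarith))
          (rpow_le_rpow (abs_nonneg x) hb hθ₀) (by positivity)
          (rpow_nonneg ((abs_nonneg x).trans ha) _)

theorem exists_rpow_mul_rpow_lt_one {q E : ℝ} (hq₀ : 0 < q) (hq₁ : q < 1) (hE : 0 < E) :
    ∃ θ : ℝ, 0 < θ ∧ θ ≤ 1 ∧ q ^ (1 - θ) * E ^ θ < 1 := by
  have hcont : ContinuousAt (fun θ : ℝ => q ^ (1 - θ) * E ^ θ) 0 :=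
    ((continuousAt_const_rpow hq₀.ne').comp (continuousAt_const.sub continuousAt_id)).mul
      (continuousAt_const_rpow hE.ne')
  have hlt : ∀ᶠ θ in 𝓝 (0 : ℝ), q ^ (1 - θ) * E ^ θ < 1 :=
    hcont.eventually_lt continuousAt_const (by simpa using hq₁)
  have hle : ∀ᶠ θ in 𝓝 (0 : ℝ), θ ≤ 1 := eventually_le_nhds one_pos
  obtain ⟨θ, ⟨hθlt, hθle⟩, hθpos⟩ :=
    (((hlt.and hle).filter_mono nhdsWithin_le_nhds).and
      (self_mem_nhdsWithin (s := Set.Ioi (0 : ℝ)))).exists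
  exact ⟨θ, hθpos, hθle, hθlt⟩

namespace Matrix

theorem abs_one_sub_smul_apply_le {ι : Type*} [DecidableEq ι] {A : Matrix ι ι ℝ}
    {dd : ι → ι → ℝ} {C α t : ℝ} (hdd : ∀ i, dd i i = 0) (ht : 0 ≤ t)
    (hA : ∀ i j, |A i j| ≤ C * exp (-α * dd i j)) (i j : ι) :
    |(1 - t • A) i j| ≤ (1 + t * C) * exp (-α * dd i j) := by
  have hone : |(1 : Matrix ι ι ℝ) i j| ≤ exp (-α * dd i j) := by
    rcases eq_or_ne i j with rfl | hij
    · simp [hdd]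
    · simp [one_apply_ne hij, (exp_pos _).le]
  calc |(1 - t • A) i j| ≤ |(1 : Matrix ι ι ℝ) i j| + t * |A i j| := by
        simpa [abs_mul, abs_of_nonneg ht] using abs_sub ((1 : Matrix ι ι ℝ) i j) (t * A i j)
    _ ≤ exp (-α * dd i j) + t * (C * exp (-α * dd i j)) := by gcongr; exact hA i j
    _ = (1 + t * C) * exp (-α * dd i j) := by ring

variable {ι : Type*} [Fintype ι] [DecidableEq ι]

theorem norm_apply_le_l2_opNorm {𝕜 : Type*} [RCLike 𝕜] (A : Matrix ι ι 𝕜) (i j : ι) :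
    ‖A i j‖ ≤ ‖A‖ :=
  calc ‖A i j‖ = ‖(toEuclideanCLM (𝕜 := 𝕜) A (EuclideanSpace.single j 1)).ofLp i‖ := by
        simp [EuclideanSpace.single, mulVec, dotProduct]
    _ ≤ ‖toEuclideanCLM (𝕜 := 𝕜) A (EuclideanSpace.single j 1)‖ := PiLp.norm_apply_le _ _
    _ ≤ ‖A‖ * ‖EuclideanSpace.single j (1 : 𝕜)‖ := (toEuclideanCLM (𝕜 := 𝕜) A).le_opNorm _
    _ = ‖A‖ := by simp

theorem norm_pow_apply_le_l2_opNorm_pow {𝕜 : Type*} [RCLike 𝕜] (B : Matrix ι ι 𝕜) (n : ℕ)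
    (i j : ι) : ‖(B ^ n) i j‖ ≤ ‖B‖ ^ n := by
  cases n with
  | zero => simp only [pow_zero, one_apply]; split_ifs <;> simp
  | succ n => exact (norm_apply_le_l2_opNorm _ i j).trans (norm_pow_le' B n.succ_pos)

theorem l2_opNorm_one_sub_smul_le {A : Matrix ι ι ℝ} {c K : ℝ} (hc : 0 < c) (hcK : c ≤ K)
    (hell : ∀ x : EuclideanSpace ℝ ι, c * ‖x‖ ^ 2 ≤ ⟪toEuclideanCLM (𝕜 := ℝ) A x, x⟫)
    (hA : ‖A‖ ≤ K) : ‖1 - (c / K ^ 2) • A‖ ≤ √(1 - c ^ 2 / K ^ 2) := by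
  have hK : 0 < K := hc.trans_le hcK
  have hq : 0 ≤ 1 - c ^ 2 / K ^ 2 := by
    rw [sub_nonneg, div_le_one (by positivity)]
    exact pow_le_pow_left₀ hc.le hcK 2
  set t := c / K ^ 2
  rw [← l2_opNorm_toEuclideanCLM]
  refine ContinuousLinearMap.opNorm_le_bound _ (sqrt_nonneg _) fun x => ?_
  set Ax := toEuclideanCLM (𝕜 := ℝ) A x
  have hAx : ‖Ax‖ ≤ K * ‖x‖ := ((toEuclideanCLM (𝕜 := ℝ) A).le_opNorm x).trans
    (mul_le_mul_of_nonneg_right hA (norm_nonneg x))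
  have hsq : ‖x - t • Ax‖ ^ 2 ≤ (1 - c ^ 2 / K ^ 2) * ‖x‖ ^ 2 := by
    have hAx2 : ‖Ax‖ ^ 2 ≤ K ^ 2 * ‖x‖ ^ 2 := by
      rw [← mul_pow]; exact pow_le_pow_left₀ (norm_nonneg _) hAx 2
    have hexpand : ‖x - t • Ax‖ ^ 2 = ‖x‖ ^ 2 - 2 * t * ⟪Ax, x⟫ + t ^ 2 * ‖Ax‖ ^ 2 := by
      rw [norm_sub_sq_real, real_inner_smul_right, real_inner_comm, norm_smul, mul_pow,
        Real.norm_eq_abs, sq_abs]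
      ring
    have ht : 0 ≤ t := by positivity
    calc ‖x - t • Ax‖ ^ 2
        ≤ ‖x‖ ^ 2 - 2 * t * (c * ‖x‖ ^ 2) + t ^ 2 * (K ^ 2 * ‖x‖ ^ 2) := by
          rw [hexpand]
          gcongr
          exact hell x
      _ = (1 - c ^ 2 / K ^ 2) * ‖x‖ ^ 2 := by simp only [t]; field_simp; ring
  have hBx : toEuclideanCLM (𝕜 := ℝ) (1 - t • A) x = x - t • Ax := by
    rw [map_sub, map_one, map_smul]; rfl
  rw [hBx, ← sqrt_sq (norm_nonneg (x - t • Ax)), ← sqrt_sq (norm_nonneg x), ← sqrt_mul hq]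
  exact sqrt_le_sqrt hsq

theorem abs_pow_apply_le_of_abs_apply_le {B : Matrix ι ι ℝ} {dd : ι → ι → ℝ} {D S α : ℝ}
    (hdd : ∀ i, dd i i = 0) (htri : ∀ i j k, dd i j ≤ dd i k + dd k j) (hα : 0 ≤ α)
    (hD : 0 ≤ D) (hB : ∀ i j, |B i j| ≤ D * exp (-α * dd i j))
    (hrow : ∀ i, ∑ k, exp (-(α / 2) * dd i k) ≤ S) (n : ℕ) (i j : ι) :
    |(B ^ n) i j| ≤ (D * S) ^ n * exp (-(α / 2) * dd i j) := by
  induction n generalizing i j with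
  | zero =>
    rcases eq_or_ne i j with rfl | hij
    · simp [hdd]
    · simp [one_apply_ne hij, (exp_pos _).le]
  | succ n ih =>
    -- the triangle inequality lets half of the decay of `B i k` pay for the path `i → k → j`
    have hsplit : ∀ k, exp (-α * dd i k) * exp (-(α / 2) * dd k j) ≤
        exp (-(α / 2) * dd i j) * exp (-(α / 2) * dd i k) := fun k => by
      rw [← exp_add, ← exp_add]
      exact exp_le_exp.mpr (by nlinarith [htri i j k])
    have hDS : 0 ≤ D * (D * S) ^ n := by
      have hS : 0 ≤ S := (Finset.sum_nonneg fun k _ => (exp_pos _).le).trans (hrow i)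
      positivity
    calc |(B ^ (n + 1)) i j| = |∑ k, B i k * (B ^ n) k j| := by rw [pow_succ', mul_apply]
      _ ≤ ∑ k, |B i k| * |(B ^ n) k j| :=
          (Finset.abs_sum_le_sum_abs _ _).trans_eq (by simp only [abs_mul])
      _ ≤ ∑ k, D * (D * S) ^ n * exp (-(α / 2) * dd i j) * exp (-(α / 2) * dd i k) := by
          refine Finset.sum_le_sum fun k _ => ?_
          calc |B i k| * |(B ^ n) k j|
              ≤ D * exp (-α * dd i k) * ((D * S) ^ n * exp (-(α / 2) * dd k j)) :=
                mul_le_mul (hB i k) (ih k j) (abs_nonneg _) (mul_nonneg hD (exp_pos _).le)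
            _ = D * (D * S) ^ n * (exp (-α * dd i k) * exp (-(α / 2) * dd k j)) := by ring
            _ ≤ D * (D * S) ^ n * (exp (-(α / 2) * dd i j) * exp (-(α / 2) * dd i k)) :=
                mul_le_mul_of_nonneg_left (hsplit k) hDS
            _ = _ := by ring
      _ = D * (D * S) ^ n * exp (-(α / 2) * dd i j) * ∑ k, exp (-(α / 2) * dd i k) := by
          rw [Finset.mul_sum]
      _ ≤ D * (D * S) ^ n * exp (-(α / 2) * dd i j) * S :=
          mul_le_mul_of_nonneg_left (hrow i) (mul_nonneg hDS (exp_pos _).le)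
      _ = (D * S) ^ (n + 1) * exp (-(α / 2) * dd i j) := by ring

theorem smul_tsum_pow_one_sub_smul_mul {A : Matrix ι ι ℝ} {t : ℝ} (h : ‖1 - t • A‖ < 1) :
    (t • ∑' n : ℕ, (1 - t • A) ^ n) * A = 1 := by
  calc (t • ∑' n : ℕ, (1 - t • A) ^ n) * A
      = (∑' n : ℕ, (1 - t • A) ^ n) * (1 - (1 - t • A)) := by
        rw [sub_sub_cancel, smul_mul_assoc, mul_smul_comm]
    _ = 1 := geom_series_mul_neg _ h

theorem abs_tsum_pow_apply_le {B : Matrix ι ι ℝ} (hB : ‖B‖ < 1) {ρ b : ℝ} (hρ₀ : 0 ≤ ρ)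
    (hρ₁ : ρ < 1) {i j : ι} (h : ∀ n, |(B ^ n) i j| ≤ ρ ^ n * b) :
    |(∑' n : ℕ, B ^ n) i j| ≤ (1 - ρ)⁻¹ * b := by
  have hsum := (summable_geometric_of_norm_lt_one hB).hasSum
  rw [(Pi.hasSum.1 (Pi.hasSum.1 hsum i) j).tsum_eq.symm]
  simpa only [Real.norm_eq_abs] using
    tsum_of_norm_bounded ((hasSum_geometric_of_lt_one hρ₀ hρ₁).mul_right b)
      fun n => (Real.norm_eq_abs _).trans_le (h n)

theorem exists_abs_inv_apply_le {c K C S α : ℝ} (hc : 0 < c) (hcK : c < K) (hC : 0 ≤ C)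
    (hS : 0 < S) (hα : 0 < α) :
    ∃ C' γ' : ℝ, 0 < C' ∧ 0 < γ' ∧
      ∀ {ι : Type u} [Fintype ι] [DecidableEq ι] (A : Matrix ι ι ℝ) (dd : ι → ι → ℝ),
        (∀ i, dd i i = 0) → (∀ i j k, dd i j ≤ dd i k + dd k j) →
        (∀ x : EuclideanSpace ℝ ι, c * ‖x‖ ^ 2 ≤ ⟪toEuclideanCLM (𝕜 := ℝ) A x, x⟫) →
        ‖A‖ ≤ K → (∀ i j, |A i j| ≤ C * exp (-α * dd i j)) →
        (∀ i, ∑ k, exp (-(α / 2) * dd i k) ≤ S) →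
        IsUnit A ∧ ∀ i j, |A⁻¹ i j| ≤ C' * exp (-γ' * dd i j) := by
  have hK : 0 < K := hc.trans hcK
  set t := c / K ^ 2
  set q := √(1 - c ^ 2 / K ^ 2)
  have ht : 0 < t := by positivity
  have hq₀ : 0 < q := sqrt_pos.mpr (by
    rw [sub_pos, div_lt_one (by positivity)]; exact pow_lt_pow_left₀ hcK hc.le two_ne_zero)
  have hq₁ : q < 1 := by
    rw [sqrt_lt' one_pos, one_pow, sub_lt_self_iff]
    positivity
  set E := (1 + t * C) * S
  obtain ⟨θ, hθ₀, hθ₁, hρ⟩ := exists_rpow_mul_rpow_lt_one hq₀ hq₁ (by positivity : 0 < E)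
  set ρ := q ^ (1 - θ) * E ^ θ
  refine ⟨(1 - ρ)⁻¹ * t, θ * (α / 2), by have := sub_pos.mpr hρ; positivity, by positivity, ?_⟩
  intro ι _ _ A dd hdd htri hell hAK hA hrow
  set B := 1 - t • A
  have hBq : ‖B‖ ≤ q := l2_opNorm_one_sub_smul_le hc hcK.le hell hAK
  have hBpow : ∀ i j n, |(B ^ n) i j| ≤ ρ ^ n * exp (-(θ * (α / 2)) * dd i j) := by
    intro i j n
    have hnorm : |(B ^ n) i j| ≤ q ^ n :=
      (norm_pow_apply_le_l2_opNorm_pow B n i j).trans (pow_le_pow_left₀ (norm_nonneg B) hBq n)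
    have hdecay : |(B ^ n) i j| ≤ E ^ n * exp (-(α / 2) * dd i j) :=
      abs_pow_apply_le_of_abs_apply_le hdd htri hα.le (by positivity)
        (abs_one_sub_smul_apply_le hdd ht.le hA) hrow n i j
    calc |(B ^ n) i j| ≤ (q ^ n) ^ (1 - θ) * (E ^ n * exp (-(α / 2) * dd i j)) ^ θ :=
          abs_le_rpow_mul_rpow_of_abs_le hθ₀.le hθ₁ hnorm hdecay
      _ = ρ ^ n * exp (-(θ * (α / 2)) * dd i j) := by
          rw [mul_rpow (by positivity) (exp_pos _).le, ← exp_mul, ← rpow_natCast, ← rpow_natCast,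
            ← rpow_mul hq₀.le, ← rpow_mul (by positivity), mul_comm (n : ℝ), mul_comm (n : ℝ),
            rpow_mul hq₀.le, rpow_mul (by positivity), rpow_natCast, rpow_natCast, mul_pow]
          ring_nf
  have hinv := smul_tsum_pow_one_sub_smul_mul (hBq.trans_lt hq₁)
  refine ⟨(isUnit_iff_isUnit_det A).mpr (isUnit_det_of_left_inverse hinv), fun i j => ?_⟩
  rw [inv_eq_left_inv hinv, smul_apply, smul_eq_mul, abs_mul, abs_of_pos ht, mul_comm _ t,
    mul_assoc]
  exact mul_le_mul_of_nonneg_left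
    (abs_tsum_pow_apply_le (hBq.trans_lt hq₁) (by positivity) hρ (hBpow i j)) ht.le

end Matrix

theorem tsum_sq_le_tsum_mul_tsum_of_sq_le_mul {ι : Type*} {r f g : ι → ℝ} (hr : 0 ≤ r)
    (hf : 0 ≤ f) (hg : 0 ≤ g) (hfs : Summable f) (hgs : Summable g)
    (hrfg : ∀ i, r i ^ 2 ≤ f i * g i) :
    Summable r ∧ (∑' i, r i) ^ 2 ≤ (∑' i, f i) * ∑' i, g i := by
  have hpartial : ∀ s : Finset ι, ∑ i ∈ s, r i ≤ √((∑' i, f i) * ∑' i, g i) := fun s => by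
    refine le_sqrt_of_sq_le ((Finset.sum_sq_le_sum_mul_sum_of_sq_le_mul s (fun i _ => hf i)
      (fun i _ => hg i) fun i _ => hrfg i).trans ?_)
    exact mul_le_mul (hfs.sum_le_tsum s fun i _ => hf i) (hgs.sum_le_tsum s fun i _ => hg i)
      (Finset.sum_nonneg fun i _ => hg i) (tsum_nonneg hf)
  refine ⟨summable_of_sum_le hr hpartial, ?_⟩
  calc (∑' i, r i) ^ 2 ≤ √((∑' i, f i) * ∑' i, g i) ^ 2 :=
        pow_le_pow_left₀ (tsum_nonneg hr) (Real.tsum_le_of_sum_le hr hpartial) 2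
    _ = (∑' i, f i) * ∑' i, g i := sq_sqrt (mul_nonneg (tsum_nonneg hf) (tsum_nonneg hg))

theorem boundedWith_schur_test {G w : Mat} {S : ℝ} (hw₀ : ∀ i j, 0 ≤ w i j)
    (hw_symm : ∀ i j, w i j = w j i) (hw_summ : ∀ i, Summable (w i))
    (hw_row : ∀ i, ∑' j, w i j ≤ S) (hG : ∀ i j, |G i j| ≤ w i j) : BoundedWith G S := by
  intro x hx
  have hS : 0 ≤ S := (tsum_nonneg (hw₀ 0)).trans (hw_row 0)
  have hw_le : ∀ i j, w i j ≤ S := fun i j =>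
    ((hw_summ i).le_tsum j fun k _ => hw₀ i k).trans (hw_row i)
  have hwx : ∀ i, Summable fun j => w i j * x j ^ 2 := fun i =>
    (hx.mul_left S).of_nonneg_of_le (fun j => mul_nonneg (hw₀ i j) (sq_nonneg _))
      fun j => mul_le_mul_of_nonneg_right (hw_le i j) (sq_nonneg _)
  have hCS : ∀ i, Summable (fun j => w i j * |x j|) ∧
      (∑' j, w i j * |x j|) ^ 2 ≤ S * ∑' j, w i j * x j ^ 2 := fun i => by
    obtain ⟨hsum, hle⟩ := tsum_sq_le_tsum_mul_tsum_of_sq_le_mul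
      (fun j => mul_nonneg (hw₀ i j) (abs_nonneg (x j))) (hw₀ i)
      (fun j => mul_nonneg (hw₀ i j) (sq_nonneg (x j))) (hw_summ i) (hwx i)
      fun j => by rw [mul_pow, sq_abs, sq, mul_assoc]
    exact ⟨hsum, hle.trans (mul_le_mul_of_nonneg_right (hw_row i) (tsum_nonneg fun j =>
      mul_nonneg (hw₀ i j) (sq_nonneg (x j))))⟩
  have habs : ∀ i j, |G i j * x j| ≤ w i j * |x j| := fun i j => by
    rw [abs_mul]; exact mul_le_mul_of_nonneg_right (hG i j) (abs_nonneg _)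
  have hrow : ∀ i, Summable fun j => |G i j * x j| := fun i =>
    (hCS i).1.of_nonneg_of_le (fun j => abs_nonneg _) (habs i)
  have hpoint : ∀ i, mulVec G x i ^ 2 ≤ S * ∑' j, w i j * x j ^ 2 := fun i => by
    refine le_trans ?_ (hCS i).2
    rw [← sq_abs]
    refine pow_le_pow_left₀ (abs_nonneg _) ?_ 2
    calc |mulVec G x i| ≤ ∑' j, |G i j * x j| :=
          norm_tsum_le_tsum_norm (f := fun j => G i j * x j) (hrow i)
      _ ≤ ∑' j, w i j * |x j| := (hrow i).tsum_le_tsum (habs i) (hCS i).1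
  -- finitely many rows at a time, so that the order of summation can be swapped freely
  have hpartial : ∀ s : Finset ℕ, ∑ i ∈ s, mulVec G x i ^ 2 ≤ S ^ 2 * ∑' j, x j ^ 2 := by
    intro s
    have hcol : ∀ j, ∑ i ∈ s, w i j ≤ S := fun j => by
      simp_rw [hw_symm _ j]
      exact ((hw_summ j).sum_le_tsum s fun i _ => hw₀ j i).trans (hw_row j)
    calc ∑ i ∈ s, mulVec G x i ^ 2 ≤ S * ∑ i ∈ s, ∑' j, w i j * x j ^ 2 := by
          rw [Finset.mul_sum]; exact Finset.sum_le_sum fun i _ => hpoint i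
      _ = S * ∑' j, (∑ i ∈ s, w i j) * x j ^ 2 := by
          rw [← Summable.tsum_finsetSum fun i _ => hwx i]
          simp_rw [Finset.sum_mul]
      _ ≤ S * ∑' j, S * x j ^ 2 := by
          refine mul_le_mul_of_nonneg_left ?_ hS
          refine Summable.tsum_le_tsum (fun j => mul_le_mul_of_nonneg_right (hcol j)
            (sq_nonneg _)) ?_ (hx.mul_left S)
          simp_rw [Finset.sum_mul]
          exact summable_sum fun i _ => hwx i
      _ = S ^ 2 * ∑' j, x j ^ 2 := by rw [tsum_mul_left]; ring
  have hGx : Memℓ2 (mulVec G x) := summable_of_sum_le (fun i => sq_nonneg _) hpartial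
  refine ⟨hrow, hGx, ?_⟩
  calc l2norm (mulVec G x) ≤ √(S ^ 2 * ∑' j, x j ^ 2) :=
        sqrt_le_sqrt (Real.tsum_le_of_sum_le (fun i => sq_nonneg _) hpartial)
    _ = S * l2norm x := by rw [sqrt_mul (sq_nonneg S), sqrt_sq hS, l2norm]

theorem isBoundedOp_of_abs_le_exp {d : ℕ → ℕ → ℝ} (hd : ∀ i j, d i j = d j i)
    (hsum : SummCond d) {ε C : ℝ} (hε : 0 < ε) (hC : 0 ≤ C) {G : Mat}
    (hG : ∀ i j, |G i j| ≤ C * exp (-ε * d i j)) : IsBoundedOp G := by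
  obtain ⟨S, hS⟩ := hsum ε hε
  have hS₀ : 0 ≤ S := (tsum_nonneg fun j => (exp_pos _).le).trans (hS 0).2
  refine ⟨C * S, mul_nonneg hC hS₀, boundedWith_schur_test
    (fun i j => mul_nonneg hC (exp_pos _).le) (fun i j => by rw [hd]) (fun i => (hS i).1.mul_left C)
    (fun i => ?_) hG⟩
  rw [tsum_mul_left]
  exact mul_le_mul_of_nonneg_left (hS i).2 hC

theorem jaffard_of_abs_le_exp {d : ℕ → ℕ → ℝ} (hd : ∀ i j, 0 ≤ d i j) {γ C : ℝ} (hC : 0 < C)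
    {G : Mat} (hG : ∀ i j, |G i j| ≤ C * exp (-γ * d i j)) : Jaffard d γ G :=
  fun γ' _ hγ' => ⟨C, hC, fun i j => (hG i j).trans <| mul_le_mul_of_nonneg_left
    (exp_le_exp.mpr (by nlinarith [hd i j])) hC.le⟩

theorem tsum_eq_sum_fin {N : ℕ} {f : ℕ → ℝ} (hf : ∀ j, N ≤ j → f j = 0) :
    ∑' j, f j = ∑ i : Fin N, f i := by
  rw [tsum_eq_sum (s := Finset.range N) fun j hj => hf j (by simpa using hj),
    Fin.sum_univ_eq_sum_range]

def zeroExtend {N : ℕ} (x : Fin N → ℝ) (j : ℕ) : ℝ := if h : j < N then x ⟨j, h⟩ else 0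

theorem zeroExtend_fin {N : ℕ} (x : Fin N → ℝ) (i : Fin N) : zeroExtend x i = x i := by
  simp [zeroExtend]

theorem zeroExtend_of_le {N : ℕ} (x : Fin N → ℝ) {j : ℕ} (hj : N ≤ j) : zeroExtend x j = 0 :=
  dif_neg (not_lt.mpr hj)

theorem memℓ2_zeroExtend {N : ℕ} (x : Fin N → ℝ) : Memℓ2 (zeroExtend x) :=
  summable_of_ne_finset_zero (s := Finset.range N) fun j hj => by
    rw [zeroExtend_of_le x (by simpa using hj), sq, mul_zero]

theorem tsum_zeroExtend_sq {N : ℕ} (x : Fin N → ℝ) :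
    ∑' j, zeroExtend x j ^ 2 = ∑ i, x i ^ 2 := by
  rw [tsum_eq_sum_fin (N := N) fun j hj => by rw [zeroExtend_of_le x hj, sq, mul_zero]]
  simp only [zeroExtend_fin]

theorem mulVec_zeroExtend (M : Mat) {N : ℕ} (x : Fin N → ℝ) (i : Fin N) :
    mulVec M (zeroExtend x) i = (sect M N).mulVec x i := by
  rw [mulVec, tsum_eq_sum_fin (N := N) fun j hj => by rw [zeroExtend_of_le x hj, mul_zero]]
  exact Finset.sum_congr rfl fun k _ => by rw [zeroExtend_fin]; rfl

theorem Elliptic.le_inner_sect {M : Mat} {c : ℝ} (hM : Elliptic M c) (N : ℕ)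
    (x : EuclideanSpace ℝ (Fin N)) :
    c * ‖x‖ ^ 2 ≤ ⟪Matrix.toEuclideanCLM (𝕜 := ℝ) (sect M N) x, x⟫ := by
  have h := hM _ (memℓ2_zeroExtend x.ofLp)
  rw [tsum_zeroExtend_sq, tsum_eq_sum_fin (N := N) fun j hj => by
    rw [zeroExtend_of_le _ hj, mul_zero]] at h
  rw [real_inner_comm, Matrix.inner_toEuclideanCLM, EuclideanSpace.real_norm_sq_eq]
  refine h.trans_eq (Finset.sum_congr rfl fun i _ => ?_)
  rw [mulVec_zeroExtend, zeroExtend_fin, mul_comm]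

theorem BoundedWith.l2_opNorm_sect_le {M : Mat} {K : ℝ} (hM : BoundedWith M K) (hK : 0 ≤ K)
    (N : ℕ) : ‖sect M N‖ ≤ K := by
  rw [← Matrix.l2_opNorm_toEuclideanCLM]
  refine ContinuousLinearMap.opNorm_le_bound _ hK fun x => ?_
  obtain ⟨-, hMx, hle⟩ := hM _ (memℓ2_zeroExtend x.ofLp)
  have hx : l2norm (zeroExtend x.ofLp) = ‖x‖ := by
    rw [l2norm, tsum_zeroExtend_sq, EuclideanSpace.norm_eq]
    simp_rw [Real.norm_eq_abs, sq_abs]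
  calc ‖Matrix.toEuclideanCLM (𝕜 := ℝ) (sect M N) x‖
      = √(∑ i : Fin N, mulVec M (zeroExtend x.ofLp) i ^ 2) := by
        simp_rw [EuclideanSpace.norm_eq, Matrix.ofLp_toEuclideanCLM, Real.norm_eq_abs, sq_abs,
          mulVec_zeroExtend]
    _ ≤ l2norm (mulVec M (zeroExtend x.ofLp)) := by
        rw [l2norm, Fin.sum_univ_eq_sum_range (fun i => mulVec M _ i ^ 2)]
        exact sqrt_le_sqrt (hMx.sum_le_tsum _ fun i _ => sq_nonneg _)
    _ ≤ K * ‖x‖ := hx ▸ hle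

theorem sum_fin_exp_le {d : ℕ → ℕ → ℝ} {ε S : ℝ}
    (hS : ∀ i, Summable (fun j => exp (-ε * d i j)) ∧ ∑' j, exp (-ε * d i j) ≤ S)
    {N : ℕ} (i : Fin N) : ∑ k : Fin N, exp (-ε * d i k) ≤ S := by
  rw [Fin.sum_univ_eq_sum_range (fun k => exp (-ε * d i k))]
  exact ((hS i).1.sum_le_tsum _ fun k _ => (exp_pos _).le).trans (hS i).2

theorem bddAbove_sect_inv_and_abs_Mbar_le {M : Mat} {b : ℕ → ℕ → ℝ}
    (h : ∀ N (i j : Fin N), |(sect M N)⁻¹ i j| ≤ b i j) :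
    (∀ i j : ℕ, BddAbove (Set.range fun k : {m : ℕ // max i j < m} =>
      |(sect M k.1)⁻¹ ⟨i, lt_of_le_of_lt (le_max_left i j) k.2⟩
          ⟨j, lt_of_le_of_lt (le_max_right i j) k.2⟩|)) ∧
    ∀ i j, |Mbar M i j| ≤ b i j := by
  have hbdd : ∀ i j : ℕ, BddAbove (Set.range fun k : {m : ℕ // max i j < m} =>
      |(sect M k.1)⁻¹ ⟨i, lt_of_le_of_lt (le_max_left i j) k.2⟩
          ⟨j, lt_of_le_of_lt (le_max_right i j) k.2⟩|) := fun i j =>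
    ⟨b i j, Set.forall_mem_range.mpr fun k => h k.1 _ _⟩
  refine ⟨hbdd, fun i j => ?_⟩
  have : Nonempty {m : ℕ // max i j < m} := ⟨⟨max i j + 1, lt_add_one _⟩⟩
  unfold Mbar
  rw [abs_of_nonneg ((abs_nonneg _).trans (le_ciSup (hbdd i j) (Classical.arbitrary _)))]
  exact ciSup_le fun k => h k.1 _ _

theorem jaffard_finite_section_inverses_general
    (d : ℕ → ℕ → ℝ) (hd : IsMetric d) (hsum : SummCond d)
    (γ : ℝ) (hγ : 0 < γ) (M : Mat) (hJ : Jaffard d γ M)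
    (Cell : ℝ) (hCell : 0 < Cell) (hell : Elliptic M Cell) :
    (∀ N : ℕ, IsUnit (sect M N)) ∧
    (∀ i j : ℕ, BddAbove (Set.range fun k : {m : ℕ // max i j < m} =>
      |(sect M k.1)⁻¹ ⟨i, lt_of_le_of_lt (le_max_left i j) k.2⟩
          ⟨j, lt_of_le_of_lt (le_max_right i j) k.2⟩|)) ∧
    ∃ γ' : ℝ, 0 < γ' ∧ Jaffard d γ' (Mbar M) ∧ IsBoundedOp (Mbar M) := by
  obtain ⟨hd₀, hd_eq, hd_symm, hd_tri⟩ := hd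
  obtain ⟨C, hC, hMC⟩ := hJ (γ / 2) (half_pos hγ) (half_lt_self hγ)
  obtain ⟨K, hK, hMK⟩ := isBoundedOp_of_abs_le_exp hd_symm hsum (half_pos hγ) hC.le hMC
  obtain ⟨S, hS⟩ := hsum (γ / 2 / 2) (by positivity)
  obtain ⟨C', γ', hC', hγ', hinv⟩ := Matrix.exists_abs_inv_apply_le (K := max K Cell + 1)
    (S := max S 1) hCell (by linarith [le_max_right K Cell]) hC.le (by positivity) (half_pos hγ)
  have hsect : ∀ N, IsUnit (sect M N) ∧
      ∀ i j : Fin N, |(sect M N)⁻¹ i j| ≤ C' * Real.exp (-γ' * d i j) := fun N =>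
    hinv (sect M N) (fun i j => d i j) (fun i => (hd_eq i i).2 rfl) (fun i j k => hd_tri i k j)
      (hell.le_inner_sect N)
      ((hMK.l2_opNorm_sect_le hK N).trans (by linarith [le_max_left K Cell]))
      (fun i j => hMC i j) (fun i => (sum_fin_exp_le hS i).trans (le_max_left S 1))
  obtain ⟨hbdd, hMbar⟩ := bddAbove_sect_inv_and_abs_Mbar_le
    (b := fun i j => C' * Real.exp (-γ' * d i j)) fun N => (hsect N).2
  exact ⟨fun N => (hsect N).1, hbdd, γ', hγ', jaffard_of_abs_le_exp hd₀ hC' hMbar,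
    isBoundedOp_of_abs_le_exp hd_symm hsum hγ' hC'.le hMbar⟩

/-- for an elliptic bounded Jaffard-class matrix, all finite sections are
invertible, the supremum matrix `M̄` of the absolute values of the entries of the
inverses of the finite sections has finite entries, lies in a Jaffard class `J(d,γ̃)`,
and induces a bounded operator on ℓ². -/
theorem jaffard_finite_section_inverses
    (d : ℕ → ℕ → ℝ) (hd : IsMetric d) (hsum : SummCond d)
    (γ : ℝ) (hγ : 0 < γ) (M : Mat) (hJ : Jaffard d γ M)
    (hbdd : IsBoundedOp M)
    (Cell : ℝ) (hCell : 0 < Cell) (hell : Elliptic M Cell) :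
    (∀ N : ℕ, IsUnit (sect M N)) ∧
    (∀ i j : ℕ, BddAbove (Set.range fun k : {m : ℕ // max i j < m} =>
      |(sect M k.1)⁻¹ ⟨i, lt_of_le_of_lt (le_max_left i j) k.2⟩
          ⟨j, lt_of_le_of_lt (le_max_right i j) k.2⟩|)) ∧
    ∃ γ' : ℝ, 0 < γ' ∧ Jaffard d γ' (Mbar M) ∧ IsBoundedOp (Mbar M) :=
  jaffard_finite_section_inverses_general d hd hsum γ hγ M hJ Cell hCell hell
end

section
/- Let (B_ℓ)_{ℓ∈ℕ} be a partition of ℕ, let M : ℕ × ℕ → ℝ, and let C > 0, 0 < q < 1, ε > 0 and r ∈ ℕ be such that: (i) |M_{ij}| ≤ C q^{(1/2+ε)|ℓ−k|} whenever i ∈ B_ℓ and j ∈ B_k; (ii) for all ℓ, k ∈ ℕ and every i ∈ B_ℓ, the cardinality of {j ∈ B_k : M_{ij} ≠ 0} is at most C q^{min{k,ℓ}−k}; (iii) for all ℓ, k ∈ ℕ and every j ∈ B_k, the cardinality of {i ∈ B_ℓ : M_{ij} ≠ 0} is at most C q^{min{k,ℓ}−ℓ}; (iv) M_{ij} = 0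 whenever i ∈ B_ℓ, j ∈ B_k with |ℓ−k| ≤ r. Then M induces a bounded operator on ℓ² with ‖M‖₂ ≤ C_geo q^{ε r}, where the constant C_geo > 0 depends only on C, q and ε. -/
/-! Schur's test with the weights `p n = q ^ (ℓ / 2)` for `n ∈ B ℓ`. In a row `i ∈ B ℓ`, the block
`B k` holds at most `C q^(min k ℓ - k)` nonzero entries, each of size at most
`C q^((1/2 + ε)|ℓ - k|)` and weight `q^(k/2)`; the exponents add up to `ℓ/2 + ε|ℓ - k|`, so the
weighted row sum is at most `C² q^(ℓ/2) ∑_{|ℓ - k| > r} q^(ε|ℓ - k|) ≤ 2C² q^(ε(r+1))/(1 - q^ε) · q^(ℓ/2)`.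
The columns are symmetric, and Schur's test bounds the norm by the same constant. -/

open Finset

lemma sum_pow_le_of_injOn {ι : Type*} {t : ℝ} (ht0 : 0 ≤ t) (ht1 : t < 1) {K : Finset ι}
    {e : ι → ℕ} {r : ℕ} (he : Set.InjOn e K) (hr : ∀ k ∈ K, r < e k) :
    ∑ k ∈ K, t ^ e k ≤ t ^ (r + 1) / (1 - t) := by
  rw [← sum_image he]
  refine (sum_le_sum_of_subset_of_nonneg (t := Ico (r + 1) ((K.image e).sup id + 1)) ?_
    fun _ _ _ => pow_nonneg ht0 _).trans (geom_sum_Ico_le_of_lt_one ht0 ht1)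
  intro m hm
  obtain ⟨k, hk, rfl⟩ := mem_image.mp hm
  exact mem_Ico.mpr ⟨hr k hk, Nat.lt_succ_of_le (le_sup (f := id) hm)⟩

lemma sum_pow_natAbs_sub_le {t : ℝ} (ht0 : 0 ≤ t) (ht1 : t < 1) {K : Finset ℕ} {ℓ r : ℕ}
    (hr : ∀ k ∈ K, r < ((ℓ : ℤ) - k).natAbs) :
    ∑ k ∈ K, t ^ ((ℓ : ℤ) - k).natAbs ≤ 2 * (t ^ (r + 1) / (1 - t)) := by
  rw [← sum_filter_add_sum_filter_not K (· ≤ ℓ), two_mul]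
  gcongr <;> refine sum_pow_le_of_injOn ht0 ht1 ?_ fun k hk => hr k (mem_of_mem_filter k hk)
  all_goals
    intro a ha b hb hab
    simp only [coe_filter, Set.mem_ofPred_eq] at ha hb hab
    omega

lemma summable_and_tsum_sq_le {ι : Type*} {f : ι → ℝ} (hf : ∀ j, 0 ≤ f j) {c : ℝ}
    (h : ∀ s : Finset ι, (∑ j ∈ s, f j) ^ 2 ≤ c) : Summable f ∧ (∑' j, f j) ^ 2 ≤ c := by
  have hs : ∀ s : Finset ι, ∑ j ∈ s, f j ≤ √c := fun s => Real.le_sqrt_of_sq_le (h s)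
  have hsum : Summable f := summable_of_sum_le hf hs
  refine ⟨hsum, ?_⟩
  calc (∑' j, f j) ^ 2 ≤ √c ^ 2 := by gcongr; exacts [tsum_nonneg hf, hsum.tsum_le_of_sum_le hs]
    _ = c := Real.sq_sqrt (by simpa using h ∅)

lemma memℓ2_and_l2norm_le_of_sum_sq_le {x y : ℕ → ℝ} {K : ℝ} (hK : 0 ≤ K)
    (h : ∀ s : Finset ℕ, ∑ i ∈ s, y i ^ 2 ≤ K ^ 2 * ∑' j, x j ^ 2) :
    Memℓ2 y ∧ l2norm y ≤ K * l2norm x := by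
  have hy : Memℓ2 y := summable_of_sum_le (fun i => sq_nonneg _) h
  refine ⟨hy, ?_⟩
  calc l2norm y ≤ √(K ^ 2 * ∑' j, x j ^ 2) := Real.sqrt_le_sqrt (hy.tsum_le_of_sum_le h)
    _ = K * l2norm x := by rw [Real.sqrt_mul (sq_nonneg K), Real.sqrt_sq hK, l2norm]

section SchurTest

variable {M : Mat} {p : ℕ → ℝ} {T : ℝ} {x : ℕ → ℝ}

lemma summable_abs_mul_sq_div (hp : ∀ n, 0 < p n)
    (hcol : ∀ j (s : Finset ℕ), ∑ i ∈ s, |M i j| * p i ≤ T * p j) (hx : Memℓ2 x) (i : ℕ) :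
    Summable fun j => |M i j| * x j ^ 2 / p j := by
  refine (hx.mul_left (T / p i)).of_nonneg_of_le (fun j => by have := hp j; positivity)
    fun j => ?_
  have hij : |M i j| * p i ≤ T * p j := by simpa using hcol j {i}
  rw [div_mul_eq_mul_div, div_le_iff₀ (hp j), div_mul_eq_mul_div, le_div_iff₀ (hp i)]
  nlinarith [sq_nonneg (x j)]

lemma sq_sum_abs_mul_le (hp : ∀ n, 0 < p n)
    (hrow : ∀ i (s : Finset ℕ), ∑ j ∈ s, |M i j| * p j ≤ T * p i)
    (hcol : ∀ j (s : Finset ℕ), ∑ i ∈ s, |M i j| * p i ≤ T * p j) (hx : Memℓ2 x)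
    (i : ℕ) (s : Finset ℕ) :
    (∑ j ∈ s, |M i j * x j|) ^ 2 ≤ T * p i * ∑' j, |M i j| * x j ^ 2 / p j :=
  calc (∑ j ∈ s, |M i j * x j|) ^ 2
      ≤ (∑ j ∈ s, |M i j| * p j) * ∑ j ∈ s, |M i j| * x j ^ 2 / p j := by
        refine sum_sq_le_sum_mul_sum_of_sq_le_mul s (fun j _ => by have := hp j; positivity)
          (fun j _ => by have := hp j; positivity) fun j _ => le_of_eq ?_
        rw [abs_mul, mul_pow, sq_abs (x j)]
        field_simp [(hp j).ne']
    _ ≤ T * p i * ∑' j, |M i j| * x j ^ 2 / p j :=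
        mul_le_mul (hrow i s)
          ((summable_abs_mul_sq_div hp hcol hx i).sum_le_tsum s fun j _ => by
            have := hp j; positivity)
          (sum_nonneg fun j _ => by have := hp j; positivity) (by simpa using hrow i ∅)

lemma sum_mul_tsum_abs_mul_sq_div_le (hp : ∀ n, 0 < p n) (hT : 0 ≤ T)
    (hcol : ∀ j (s : Finset ℕ), ∑ i ∈ s, |M i j| * p i ≤ T * p j) (hx : Memℓ2 x)
    (s : Finset ℕ) :
    ∑ i ∈ s, T * p i * ∑' j, |M i j| * x j ^ 2 / p j ≤ T ^ 2 * ∑' j, x j ^ 2 := by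
  have hbound : ∀ j, (∑ i ∈ s, |M i j| * p i) * (x j ^ 2 / p j) ≤ T * x j ^ 2 := fun j =>
    calc (∑ i ∈ s, |M i j| * p i) * (x j ^ 2 / p j) ≤ T * p j * (x j ^ 2 / p j) := by
          gcongr; exacts [by have := hp j; positivity, hcol j s]
      _ = T * x j ^ 2 := by field_simp [(hp j).ne']
  have hswap : ∑ i ∈ s, p i * ∑' j, |M i j| * x j ^ 2 / p j =
      ∑' j, (∑ i ∈ s, |M i j| * p i) * (x j ^ 2 / p j) :=
    calc ∑ i ∈ s, p i * ∑' j, |M i j| * x j ^ 2 / p j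
        = ∑ i ∈ s, ∑' j, p i * (|M i j| * x j ^ 2 / p j) :=
          sum_congr rfl fun i _ => tsum_mul_left.symm
      _ = ∑' j, ∑ i ∈ s, p i * (|M i j| * x j ^ 2 / p j) :=
          (Summable.tsum_finsetSum fun i _ =>
            (summable_abs_mul_sq_div hp hcol hx i).mul_left (p i)).symm
      _ = ∑' j, (∑ i ∈ s, |M i j| * p i) * (x j ^ 2 / p j) :=
          tsum_congr fun j => by rw [sum_mul]; exact sum_congr rfl fun i _ => by ring
  have hsummable : Summable fun j => (∑ i ∈ s, |M i j| * p i) * (x j ^ 2 / p j) :=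
    (hx.mul_left T).of_nonneg_of_le (fun j => mul_nonneg
      (sum_nonneg fun i _ => mul_nonneg (abs_nonneg _) (hp i).le)
      (div_nonneg (sq_nonneg _) (hp j).le)) hbound
  calc ∑ i ∈ s, T * p i * ∑' j, |M i j| * x j ^ 2 / p j
      = T * ∑ i ∈ s, p i * ∑' j, |M i j| * x j ^ 2 / p j := by
        rw [mul_sum]; exact sum_congr rfl fun i _ => by ring
    _ ≤ T * ∑' j, T * x j ^ 2 := by
        rw [hswap]
        exact mul_le_mul_of_nonneg_left (hsummable.tsum_le_tsum hbound (hx.mul_left T)) hT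
    _ = T ^ 2 * ∑' j, x j ^ 2 := by rw [tsum_mul_left]; ring

theorem boundedWith_of_schur_test (hp : ∀ n, 0 < p n) (hT : 0 ≤ T)
    (hrow : ∀ i (s : Finset ℕ), ∑ j ∈ s, |M i j| * p j ≤ T * p i)
    (hcol : ∀ j (s : Finset ℕ), ∑ i ∈ s, |M i j| * p i ≤ T * p j) : BoundedWith M T := by
  intro x hx
  have hrow_abs i := summable_and_tsum_sq_le (fun j => abs_nonneg _)
    (sq_sum_abs_mul_le hp hrow hcol hx i)
  have hMx : ∀ i, mulVec M x i ^ 2 ≤ T * p i * ∑' j, |M i j| * x j ^ 2 / p j := by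
    intro i
    have habs : |mulVec M x i| ≤ ∑' j, |M i j * x j| := by
      unfold mulVec
      simpa only [Real.norm_eq_abs] using
        norm_tsum_le_tsum_norm ((hrow_abs i).1.congr fun j => (Real.norm_eq_abs (M i j * x j)).symm)
    rw [← sq_abs]
    exact (pow_le_pow_left₀ (abs_nonneg _) habs 2).trans (hrow_abs i).2
  exact ⟨fun i => (hrow_abs i).1, memℓ2_and_l2norm_le_of_sum_sq_le hT fun s =>
    (sum_le_sum fun i _ => hMx i).trans (sum_mul_tsum_abs_mul_sq_div_le hp hT hcol hx s)⟩

end SchurTest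

lemma rpow_count_mul_decay_mul_weight {q : ℝ} (hq0 : 0 < q) (ε : ℝ) (ℓ k : ℕ) :
    q ^ (((min k ℓ : ℕ) : ℝ) - k) * (q ^ ((1 / 2 + ε) * |(ℓ : ℝ) - k|) * q ^ ((k : ℝ) / 2)) =
      q ^ ((ℓ : ℝ) / 2) * (q ^ ε) ^ ((ℓ : ℤ) - k).natAbs := by
  have habs : |(ℓ : ℝ) - k| = (((ℓ : ℤ) - k).natAbs : ℝ) := by
    rw [Nat.cast_natAbs]; push_cast; rfl
  rw [← Real.rpow_natCast, ← Real.rpow_mul hq0.le, ← Real.rpow_add hq0, ← Real.rpow_add hq0,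
    ← Real.rpow_add hq0, ← habs]
  congr 1
  rcases le_total k ℓ with h | h
  · rw [min_eq_left h, abs_of_nonneg (by simpa using h)]; ring
  · rw [min_eq_right h, abs_of_nonpos (by simpa using h)]; ring

/-- `blk n` is the index of the block containing `n`. -/
structure IsBlockDecaying (C q ε : ℝ) (r : ℕ) (blk : ℕ → ℕ) (M : Mat) : Prop where
  abs_le : ∀ i j, |M i j| ≤ C * q ^ ((1 / 2 + ε) * |(blk i : ℝ) - blk j|)
  card_le : ∀ i k (s : Finset ℕ), (∀ j ∈ s, blk j = k ∧ M i j ≠ 0) →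
    (s.card : ℝ) ≤ C * q ^ (((min k (blk i) : ℕ) : ℝ) - k)
  eq_zero : ∀ i j, ((blk i : ℤ) - blk j).natAbs ≤ r → M i j = 0

namespace IsBlockDecaying

variable {C q ε : ℝ} {r : ℕ} {blk : ℕ → ℕ} {M : Mat}

lemma sum_fiber_le (h : IsBlockDecaying C q ε r blk M) (hC : 0 ≤ C) (hq0 : 0 < q) (i k : ℕ)
    (s : Finset ℕ) (hs : ∀ j ∈ s, blk j = k ∧ M i j ≠ 0) :
    ∑ j ∈ s, |M i j| * q ^ ((blk j : ℝ) / 2) ≤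
      C ^ 2 * q ^ ((blk i : ℝ) / 2) * (q ^ ε) ^ ((blk i : ℤ) - k).natAbs := by
  have hterm : ∀ j ∈ s, |M i j| * q ^ ((blk j : ℝ) / 2) ≤
      C * q ^ ((1 / 2 + ε) * |(blk i : ℝ) - k|) * q ^ ((k : ℝ) / 2) := fun j hj => by
    rw [← (hs j hj).1]
    exact mul_le_mul_of_nonneg_right (h.abs_le i j) (Real.rpow_nonneg hq0.le _)
  calc ∑ j ∈ s, |M i j| * q ^ ((blk j : ℝ) / 2)
      ≤ s.card * (C * q ^ ((1 / 2 + ε) * |(blk i : ℝ) - k|) * q ^ ((k : ℝ) / 2)) := by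
        simpa only [nsmul_eq_mul] using sum_le_card_nsmul s _ _ hterm
    _ ≤ C * q ^ (((min k (blk i) : ℕ) : ℝ) - k) *
          (C * q ^ ((1 / 2 + ε) * |(blk i : ℝ) - k|) * q ^ ((k : ℝ) / 2)) := by
        gcongr
        exact h.card_le i k s hs
    _ = C ^ 2 * q ^ ((blk i : ℝ) / 2) * (q ^ ε) ^ ((blk i : ℤ) - k).natAbs := by
        linear_combination C ^ 2 * rpow_count_mul_decay_mul_weight hq0 ε (blk i) k

lemma sum_abs_mul_weight_le (h : IsBlockDecaying C q ε r blk M) (hC : 0 ≤ C) (hq0 : 0 < q)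
    (hq1 : q < 1) (hε : 0 < ε) (i : ℕ) (s : Finset ℕ) :
    ∑ j ∈ s, |M i j| * q ^ ((blk j : ℝ) / 2) ≤
      2 * C ^ 2 * (q ^ ε) ^ (r + 1) / (1 - q ^ ε) * q ^ ((blk i : ℝ) / 2) := by
  set t := q ^ ε
  have ht0 : 0 ≤ t := Real.rpow_nonneg hq0.le ε
  have ht1 : t < 1 := Real.rpow_lt_one hq0.le hq1 hε
  set s' := s.filter (M i · ≠ 0)
  have hfar : ∀ k ∈ s'.image blk, r < ((blk i : ℤ) - k).natAbs := by
    intro k hk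
    obtain ⟨j, hj, rfl⟩ := mem_image.mp hk
    by_contra! hnear
    exact (mem_filter.mp hj).2 (h.eq_zero i j hnear)
  calc ∑ j ∈ s, |M i j| * q ^ ((blk j : ℝ) / 2)
      = ∑ j ∈ s', |M i j| * q ^ ((blk j : ℝ) / 2) := by
        rw [sum_filter_of_ne]
        intro j _ hj hM
        simp [hM] at hj
    _ = ∑ k ∈ s'.image blk, ∑ j ∈ s' with blk j = k, |M i j| * q ^ ((blk j : ℝ) / 2) :=
        (sum_fiberwise_of_maps_to (fun j hj => mem_image_of_mem blk hj) _).symm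
    _ ≤ ∑ k ∈ s'.image blk, C ^ 2 * q ^ ((blk i : ℝ) / 2) * t ^ ((blk i : ℤ) - k).natAbs := by
        refine sum_le_sum fun k _ => h.sum_fiber_le hC hq0 i k _ fun j hj => ?_
        obtain ⟨hjs, rfl⟩ := mem_filter.mp hj
        exact ⟨rfl, (mem_filter.mp hjs).2⟩
    _ ≤ C ^ 2 * q ^ ((blk i : ℝ) / 2) * (2 * (t ^ (r + 1) / (1 - t))) := by
        rw [← mul_sum]
        gcongr
        exact sum_pow_natAbs_sub_le ht0 ht1 hfar
    _ = 2 * C ^ 2 * t ^ (r + 1) / (1 - t) * q ^ ((blk i : ℝ) / 2) := by ring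

end IsBlockDecaying

lemma isBlockDecaying_of_blocks {C q ε : ℝ} {r : ℕ} {B : ℕ → Set ℕ} {blk : ℕ → ℕ}
    (hblk : ∀ n, n ∈ B (blk n)) {M : Mat}
    (hdecay : ∀ ℓ k i j, i ∈ B ℓ → j ∈ B k →
      |M i j| ≤ C * q ^ ((1 / 2 + ε) * |(ℓ : ℝ) - (k : ℝ)|))
    (hrow : ∀ ℓ k i, i ∈ B ℓ →
      (B k ∩ {j | M i j ≠ 0}).Finite ∧
      ((B k ∩ {j | M i j ≠ 0}).ncard : ℝ) ≤ C * q ^ (((min k ℓ : ℕ) : ℝ) - (k : ℝ)))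
    (hvan : ∀ ℓ k i j, i ∈ B ℓ → j ∈ B k → |(ℓ : ℤ) - (k : ℤ)| ≤ (r : ℤ) → M i j = 0) :
    IsBlockDecaying C q ε r blk M where
  abs_le i j := hdecay _ _ i j (hblk i) (hblk j)
  card_le i k s hs := by
    obtain ⟨hfin, hle⟩ := hrow (blk i) k i (hblk i)
    have hsub : (s : Set ℕ) ⊆ B k ∩ {j | M i j ≠ 0} := fun j hj =>
      ⟨(hs j hj).1 ▸ hblk j, (hs j hj).2⟩
    calc (s.card : ℝ) = (s : Set ℕ).ncard := by rw [Set.ncard_coe_finset]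
      _ ≤ (B k ∩ {j | M i j ≠ 0}).ncard := by exact_mod_cast Set.ncard_le_ncard hsub hfin
      _ ≤ _ := hle
  eq_zero i j hij := hvan _ _ i j (hblk i) (hblk j) (by rw [Int.abs_eq_natAbs]; exact_mod_cast hij)

lemma isBlockDecaying_transpose_of_blocks {C q ε : ℝ} {r : ℕ} {B : ℕ → Set ℕ} {blk : ℕ → ℕ}
    (hblk : ∀ n, n ∈ B (blk n)) {M : Mat}
    (hdecay : ∀ ℓ k i j, i ∈ B ℓ → j ∈ B k →
      |M i j| ≤ C * q ^ ((1 / 2 + ε) * |(ℓ : ℝ) - (k : ℝ)|))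
    (hcol : ∀ ℓ k j, j ∈ B k →
      (B ℓ ∩ {i | M i j ≠ 0}).Finite ∧
      ((B ℓ ∩ {i | M i j ≠ 0}).ncard : ℝ) ≤ C * q ^ (((min k ℓ : ℕ) : ℝ) - (ℓ : ℝ)))
    (hvan : ∀ ℓ k i j, i ∈ B ℓ → j ∈ B k → |(ℓ : ℤ) - (k : ℤ)| ≤ (r : ℤ) → M i j = 0) :
    IsBlockDecaying C q ε r blk fun i j => M j i :=
  isBlockDecaying_of_blocks hblk
    (fun ℓ k i j hi hj => by simpa only [abs_sub_comm] using hdecay k ℓ j i hj hi)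
    (fun ℓ k j hj => by simpa only [min_comm] using hcol k ℓ j hj)
    (fun ℓ k i j hi hj hij => hvan k ℓ j i hj hi (by rwa [abs_sub_comm]))

/-- geometric-decay lemma. A matrix whose entries decay like
`q^{(1/2+ε)|ℓ−k|}` across a partition `(B_ℓ)` of ℕ, with geometrically controlled
numbers of nonzero entries per row and column, and which vanishes on block pairs
with `|ℓ−k| ≤ r`, is a bounded operator with `‖M‖₂ ≤ C_geo q^{εr}`, where `C_geo`
depends only on `C`, `q`, and `ε`. -/
theorem geometric_block_decay_bound
    (C q ε : ℝ) (hC : 0 < C) (hq0 : 0 < q) (hq1 : q < 1) (hε : 0 < ε) :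
    ∃ Cgeo : ℝ, 0 < Cgeo ∧
      ∀ (B : ℕ → Set ℕ) (M : Mat) (r : ℕ),
        (Pairwise fun ℓ k => Disjoint (B ℓ) (B k)) →
        (⋃ ℓ, B ℓ) = Set.univ →
        (∀ ℓ k i j, i ∈ B ℓ → j ∈ B k →
          |M i j| ≤ C * q ^ ((1 / 2 + ε) * |(ℓ : ℝ) - (k : ℝ)|)) →
        (∀ ℓ k i, i ∈ B ℓ →
          (B k ∩ {j | M i j ≠ 0}).Finite ∧
          ((B k ∩ {j | M i j ≠ 0}).ncard : ℝ) ≤ C * q ^ (((min k ℓ : ℕ) : ℝ) - (k : ℝ))) →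
        (∀ ℓ k j, j ∈ B k →
          (B ℓ ∩ {i | M i j ≠ 0}).Finite ∧
          ((B ℓ ∩ {i | M i j ≠ 0}).ncard : ℝ) ≤ C * q ^ (((min k ℓ : ℕ) : ℝ) - (ℓ : ℝ))) →
        (∀ ℓ k i j, i ∈ B ℓ → j ∈ B k → |(ℓ : ℤ) - (k : ℤ)| ≤ (r : ℤ) → M i j = 0) →
        BoundedWith M (Cgeo * q ^ (ε * (r : ℝ))) := by
  have ht1 : q ^ ε < 1 := Real.rpow_lt_one hq0.le hq1 hε
  refine ⟨2 * C ^ 2 * q ^ ε / (1 - q ^ ε), by have := sub_pos.mpr ht1; positivity, ?_⟩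
  intro B M r _ hcover hdecay hrow hcol hvan
  choose blk hblk using fun n => Set.mem_iUnion.mp (hcover ▸ Set.mem_univ n)
  have hM := isBlockDecaying_of_blocks hblk hdecay hrow hvan
  have hMt := isBlockDecaying_transpose_of_blocks hblk hdecay hcol hvan
  have hconst : 2 * C ^ 2 * q ^ ε / (1 - q ^ ε) * q ^ (ε * (r : ℝ)) =
      2 * C ^ 2 * (q ^ ε) ^ (r + 1) / (1 - q ^ ε) := by
    rw [Real.rpow_mul hq0.le, Real.rpow_natCast]; ring
  rw [hconst]
  exact boundedWith_of_schur_test (fun n => Real.rpow_pos_of_pos hq0 _)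
    (by have := sub_pos.mpr ht1; positivity)
    (hM.sum_abs_mul_weight_le hC.le hq0 hq1 hε) (hMt.sum_abs_mul_weight_le hC.le hq0 hq1 hε)
end

section
/- Let B be a set, L : B → ℕ a level function, and for each k ∈ ℕ let δ_k : B × B → ℕ be a symmetric function with δ_k(v,w) ≥ 1 for all v,w ∈ B and δ_k(v,v) = 1, satisfying the triangle inequality δ_k(u,w) ≤ δ_k(u,v) + δ_k(v,w) and the level-scaling estimates δ_k(v,w) ≤ C^{k−n} δ_n(v,w) for k > n and δ_k(v,w) ≤ δ_n(v,w) for k ≤ n, for a fixed constant C ≥ 1. Let δ(v,w) := 0 if v = w and δ(v,w) := 1 otherwise, and for β > 0 define d₂(v,w) := δ(v,w) + β|L(v) − L(w)| + log( δ(v,w) + δ_{min{L(v),L(w)}}(v,w) ). Then for every β ≥ log C, d₂ is a metric on B: d₂(v,w) ≥ 0 with equality iff v = w, d₂ is symmetric, and d₂(u,w) ≤ d₂(u,v) + d₂(v,w) for all u,v,w ∈ B. -/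
/-- The metric `d₂(v,w) = δ(v,w) + β|L(v) − L(w)| + log(δ(v,w) + δ_{min{L v, L w}}(v,w))`. -/
noncomputable def d2 {B : Type*} [DecidableEq B] (L : B → ℕ) (δk : ℕ → B → B → ℕ)
    (β : ℝ) (v w : B) : ℝ :=
  (if v = w then 0 else 1) + β * |(L v : ℝ) - (L w : ℝ)| +
    Real.log ((if v = w then (0 : ℝ) else 1) + (δk (min (L v) (L w)) v w : ℝ))

/-- for `β ≥ log C`, the function `d₂` is a metric on `B`. -/
theorem d2_is_metric
    {B : Type*} [DecidableEq B] (L : B → ℕ) (δk : ℕ → B → B → ℕ) (C : ℝ) (hC : 1 ≤ C)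
    (hsymm : ∀ k v w, δk k v w = δk k w v)
    (hpos : ∀ k v w, 1 ≤ δk k v w)
    (hrefl : ∀ k v, δk k v v = 1)
    (htri : ∀ k u v w, δk k u w ≤ δk k u v + δk k v w)
    (hscale_up : ∀ k n v w, n < k → (δk k v w : ℝ) ≤ C ^ (k - n) * (δk n v w : ℝ))
    (hscale_down : ∀ k n v w, k ≤ n → δk k v w ≤ δk n v w)
    (β : ℝ) (hβ0 : 0 < β) (hβ : Real.log C ≤ β) :
    (∀ v w, 0 ≤ d2 L δk β v w) ∧
    (∀ v w, d2 L δk β v w = 0 ↔ v = w) ∧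
    (∀ v w, d2 L δk β v w = d2 L δk β w v) ∧
    (∀ u v w, d2 L δk β u w ≤ d2 L δk β u v + d2 L δk β v w) := by
  have hδ1 : ∀ k v w, (1:ℝ) ≤ (δk k v w : ℝ) := fun k v w => by exact_mod_cast hpos k v w
  have hself : ∀ v, d2 L δk β v v = 0 := by
    intro v
    simp [d2, hrefl]
  have hge : ∀ v w, v ≠ w → (1:ℝ) ≤ d2 L δk β v w := by
    intro v w h
    simp only [d2, if_neg h]
    have h1 := hδ1 (min (L v) (L w)) v w
    have hlog : (0:ℝ) ≤ Real.log (1 + (δk (min (L v) (L w)) v w : ℝ)) :=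
      Real.log_nonneg (by linarith)
    have habs : (0:ℝ) ≤ β * |(L v : ℝ) - (L w : ℝ)| :=
      mul_nonneg hβ0.le (abs_nonneg _)
    linarith
  have hnn : ∀ v w, 0 ≤ d2 L δk β v w := by
    intro v w
    by_cases h : v = w
    · subst h; rw [hself]
    · linarith [hge v w h]
  refine ⟨hnn, ?_, ?_, ?_⟩
  · intro v w
    constructor
    · intro h
      by_contra hne
      have := hge v w hne
      linarith
    · intro h; subst h; exact hself v
  · intro v w
    by_cases h : v = w
    · subst h; rfl
    · simp only [d2, if_neg h, if_neg (Ne.symm h)]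
      rw [min_comm (L v) (L w), hsymm _ v w, abs_sub_comm]
  · intro u v w
    by_cases huw : u = w
    · subst huw; rw [hself]; exact add_nonneg (hnn u v) (hnn v u)
    by_cases huv : u = v
    · subst huv; rw [hself]; linarith
    by_cases hvw : v = w
    · subst hvw; rw [hself]; linarith
    simp only [d2, if_neg huw, if_neg huv, if_neg hvw]
    set m := min (L u) (L w) with hm
    set a := min (L u) (L v) with ha
    set b := min (L v) (L w) with hb
    have habs : |(L u : ℝ) - (L w : ℝ)| ≤ |(L u : ℝ) - (L v : ℝ)| + |(L v : ℝ) - (L w : ℝ)| :=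
      abs_sub_le _ _ _
    have hx := hδ1 a u v
    have hy := hδ1 b v w
    have hlogprod : Real.log (1 + (δk a u v : ℝ) + (δk b v w : ℝ)) ≤
        Real.log (1 + (δk a u v : ℝ)) + Real.log (1 + (δk b v w : ℝ)) := by
      rw [← Real.log_mul (by linarith) (by linarith)]
      apply Real.log_le_log (by linarith)
      nlinarith
    by_cases hcase : m ≤ L v
    · -- low level case: m ≤ a, m ≤ b
      have hma : m ≤ a := le_min (min_le_left _ _) hcase
      have hmb : m ≤ b := le_min hcase (min_le_right _ _)
      have h1 : (δk m u w : ℝ) ≤ (δk a u v : ℝ) + (δk b v w : ℝ) := by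
        have := htri m u v w
        have h2 := hscale_down m a u v hma
        have h3 := hscale_down m b v w hmb
        exact_mod_cast le_trans this (Nat.add_le_add h2 h3)
      have hlog : Real.log (1 + (δk m u w : ℝ)) ≤
          Real.log (1 + (δk a u v : ℝ)) + Real.log (1 + (δk b v w : ℝ)) := by
        have h2 : Real.log (1 + (δk m u w : ℝ)) ≤
            Real.log (1 + (δk a u v : ℝ) + (δk b v w : ℝ)) :=
          Real.log_le_log (by linarith [hδ1 m u w]) (by linarith)
        linarith
      have hβabs := mul_le_mul_of_nonneg_left habs hβ0.le
      rw [mul_add] at hβabs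
      linarith
    · -- high level case: L v < m
      push_neg at hcase
      have hvu : L v < L u := lt_of_lt_of_le hcase (min_le_left _ _)
      have hvw' : L v < L w := lt_of_lt_of_le hcase (min_le_right _ _)
      have hav : a = L v := min_eq_right hvu.le
      have hbv : b = L v := min_eq_left hvw'.le
      set e := m - L v with he
      have hCe : (1:ℝ) ≤ C ^ e := one_le_pow₀ hC
      have hμ : (δk m u w : ℝ) ≤ C ^ e * (δk (L v) u w : ℝ) := hscale_up m (L v) u w hcase
      have htr : (δk (L v) u w : ℝ) ≤ (δk (L v) u v : ℝ) + (δk (L v) v w : ℝ) := by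
        exact_mod_cast htri (L v) u v w
      have hx' := hδ1 (L v) u v
      have hy' := hδ1 (L v) v w
      have hsum : (1:ℝ) + (δk m u w : ℝ) ≤ C ^ e * (1 + (δk (L v) u v : ℝ) + (δk (L v) v w : ℝ)) := by
        have := mul_le_mul_of_nonneg_left htr (le_trans zero_le_one hCe)
        nlinarith
      have hlog1 : Real.log (1 + (δk m u w : ℝ)) ≤
          (e : ℝ) * Real.log C + Real.log (1 + (δk (L v) u v : ℝ) + (δk (L v) v w : ℝ)) := by
        have hpos1 : (0:ℝ) < 1 + (δk (L v) u v : ℝ) + (δk (L v) v w : ℝ) := by linarith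
        have := Real.log_le_log (by linarith [hδ1 m u w]) hsum
        rwa [Real.log_mul (by positivity) (ne_of_gt hpos1), Real.log_pow] at this
      have hlogC : (e : ℝ) * Real.log C ≤ (e : ℝ) * β :=
        mul_le_mul_of_nonneg_left hβ (Nat.cast_nonneg e)
      -- index arithmetic with β
      have hLuv : |(L u : ℝ) - (L v : ℝ)| = (L u : ℝ) - L v := by
        have : (L v:ℝ) ≤ L u := by exact_mod_cast hvu.le
        rw [abs_of_nonneg (by linarith)]
      have hLvw : |(L v : ℝ) - (L w : ℝ)| = (L w : ℝ) - L v := by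
        rw [abs_sub_comm, abs_of_nonneg]
        have : (L v:ℝ) ≤ L w := by exact_mod_cast hvw'.le
        linarith
      have hecast : (e : ℝ) = (m : ℝ) - (L v : ℝ) := by
        rw [he, Nat.cast_sub hcase.le]
      have hmcast : (m : ℝ) = min (L u : ℝ) (L w : ℝ) := by
        rw [hm]; push_cast; rfl
      have hminmax : min (L u : ℝ) (L w : ℝ) + max (L u : ℝ) (L w : ℝ) = (L u : ℝ) + (L w : ℝ) :=
        min_add_max _ _
      have hmaxabs : max (L u : ℝ) (L w : ℝ) - min (L u : ℝ) (L w : ℝ) = |(L u : ℝ) - (L w : ℝ)| :=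
        (max_sub_min_eq_abs _ _).trans (abs_sub_comm _ _)
      have hidx : |(L u : ℝ) - (L w : ℝ)| + (e : ℝ) ≤
          |(L u : ℝ) - (L v : ℝ)| + |(L v : ℝ) - (L w : ℝ)| := by
        rw [hLuv, hLvw, hecast, hmcast, ← hmaxabs]
        have hmv : (L v : ℝ) ≤ min (L u : ℝ) (L w : ℝ) := by
          rw [← hmcast]; exact_mod_cast hcase.le
        linarith
      have hβidx := mul_le_mul_of_nonneg_left hidx hβ0.le
      rw [mul_add, mul_add] at hβidx
      rw [hav, hbv] at hlogprod ⊢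
      linarith
end

section
/- Let M : ℕ × ℕ → ℝ induce a bounded operator on ℓ² and admit an LU-factorization M = LU (entrywise, L lower triangular, U upper triangular, the defining sums having finitely many nonzero terms) such that L and U have lower- respectively upper-triangular two-sided entrywise inverses L⁻¹ and U⁻¹, and such that L, U, L⁻¹, U⁻¹ all induce bounded operators on ℓ². Let F ∈ ℓ², let λ := M⁻¹ F ∈ ℓ² (M is invertible on ℓ² since M = LU with bounded invertible factors), let (N_ℓ)_{ℓ∈ℕ} be strictly increasing in ℕ, and for each ℓ let λ(ℓ) ∈ ℓ² be a Galerkin solution of level ℓ, i.e. λ(ℓ)_i = 0 for i > N_ℓ and (Mλ(ℓ))_i = F_i for 1 ≤ i ≤ N_ℓ. Then (Uλ(ℓ))_i = (Uλ)_i for all 1 ≤ i ≤ N_ℓ and (Uλ(ℓ))_i = 0 for all i > N_ℓ; consequently, for every ℓ ∈ ℕ, (‖U‖₂‖U⁻¹‖₂)⁻² ‖λ − λ(ℓ)‖²_{ℓ²} ≤ Σ_{k=ℓ}^{∞} ‖λ(k+1) − λ(k)‖²_{ℓ²} ≤ (‖U‖₂‖U⁻¹‖₂)² ‖λ − λ(ℓ)‖²_{ℓ²}.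 -/
noncomputable def opNorm (M : Mat) : ℝ := sInf {K : ℝ | 0 ≤ K ∧ BoundedWith M K}

def LowerTri (M : Mat) : Prop := ∀ i j, i < j → M i j = 0

def UpperTri (M : Mat) : Prop := ∀ i j, j < i → M i j = 0

def idMat : Mat := fun p q => if p = q then 1 else 0

/-!
On the first `N_ℓ` rows, `M = LU` turns the Galerkin equations into a lower-triangular system for
`Uλ(ℓ)` with the same right-hand side as for `Uλ`, so forward substitution gives that `Uλ(ℓ)` is
the truncation of `Uλ` to its first `N_ℓ` entries. The increments `U(λ(k+1) - λ(k))` are therefore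
the disjoint blocks of `Uλ` between `N_k` and `N_{k+1}`, whose squared norms add up (Pythagoras) to
that of the tail `U(λ - λ(ℓ))`. Passing through `U` and `U⁻¹` costs a factor `‖U‖²` or `‖U⁻¹‖²`
in each direction.
-/

open Filter Topology Finset

lemma Memℓ2.sub {x y : ℕ → ℝ} (hx : Memℓ2 x) (hy : Memℓ2 y) :
    Memℓ2 (fun i => x i - y i) := by
  refine .of_nonneg_of_le (fun i => sq_nonneg _) (fun i => ?_) ((hx.mul_left 2).add (hy.mul_left 2))
  nlinarith [sq_nonneg (x i + y i)]

lemma l2norm_sq (x : ℕ → ℝ) : l2norm x ^ 2 = ∑' i, x i ^ 2 :=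
  Real.sq_sqrt (tsum_nonneg fun _ => sq_nonneg _)

lemma IsBoundedOp.summable_row {M : Mat} (hM : IsBoundedOp M) {x : ℕ → ℝ} (hx : Memℓ2 x)
    (i : ℕ) : Summable fun j => M i j * x j :=
  let ⟨_, _, hb⟩ := hM
  ((hb x hx).1 i).of_abs

lemma IsBoundedOp.memℓ2_mulVec {M : Mat} (hM : IsBoundedOp M) {x : ℕ → ℝ} (hx : Memℓ2 x) :
    Memℓ2 (mulVec M x) :=
  let ⟨_, _, hb⟩ := hM
  (hb x hx).2.1

lemma IsBoundedOp.l2norm_mulVec_le {M : Mat} (hM : IsBoundedOp M) {x : ℕ → ℝ} (hx : Memℓ2 x) :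
    l2norm (mulVec M x) ≤ opNorm M * l2norm x := by
  obtain ⟨K, hK, hb⟩ := hM
  have hx0 : 0 ≤ l2norm x := Real.sqrt_nonneg _
  rcases hx0.eq_or_lt with hx0 | hx0
  · simpa [← hx0] using (hb x hx).2.2
  · rw [← div_le_iff₀ hx0]
    exact le_csInf ⟨K, hK, hb⟩ fun K' hK' => (div_le_iff₀ hx0).2 (hK'.2 x hx).2.2

lemma IsBoundedOp.tsum_sq_mulVec_le {M : Mat} (hM : IsBoundedOp M) {x : ℕ → ℝ} (hx : Memℓ2 x) :
    ∑' i, mulVec M x i ^ 2 ≤ opNorm M ^ 2 * ∑' i, x i ^ 2 := by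
  rw [← l2norm_sq, ← l2norm_sq, ← mul_pow]
  exact pow_le_pow_left₀ (Real.sqrt_nonneg _) (hM.l2norm_mulVec_le hx) 2

lemma IsBoundedOp.sq_mulVec_apply_le {M : Mat} (hM : IsBoundedOp M) {x : ℕ → ℝ} (hx : Memℓ2 x)
    (i : ℕ) : mulVec M x i ^ 2 ≤ opNorm M ^ 2 * ∑' j, x j ^ 2 :=
  ((hM.memℓ2_mulVec hx).le_tsum i fun _ _ => sq_nonneg _).trans (hM.tsum_sq_mulVec_le hx)

lemma IsBoundedOp.mulVec_sub {M : Mat} (hM : IsBoundedOp M) {x y : ℕ → ℝ} (hx : Memℓ2 x)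
    (hy : Memℓ2 y) : mulVec M (fun j => x j - y j) = fun i => mulVec M x i - mulVec M y i := by
  funext i
  simp only [mulVec, mul_sub]
  exact (hM.summable_row hx i).tsum_sub (hM.summable_row hy i)

def trunc (n : ℕ) (x : ℕ → ℝ) : ℕ → ℝ := fun i => if i < n then x i else 0

lemma hasSum_ite_lt (f : ℕ → ℝ) (n : ℕ) :
    HasSum (fun i => if i < n then f i else 0) (∑ i ∈ range n, f i) := by
  have h : HasSum (fun i => if i < n then f i else 0) (∑ i ∈ range n, if i < n then f i else 0) :=
    hasSum_sum_of_ne_finset_zero fun i hi => if_neg (by simpa using hi)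
  rwa [sum_ite_of_true fun i hi => mem_range.1 hi] at h

lemma memℓ2_trunc (n : ℕ) (x : ℕ → ℝ) : Memℓ2 (trunc n x) :=
  (hasSum_ite_lt (fun i => x i ^ 2) n).summable.congr fun i => by
    unfold trunc; split_ifs <;> simp

lemma hasSum_sq_trunc_sub_trunc (x : ℕ → ℝ) {m n : ℕ} (hmn : m ≤ n) :
    HasSum (fun i => (trunc n x i - trunc m x i) ^ 2)
      (∑ i ∈ range n, x i ^ 2 - ∑ i ∈ range m, x i ^ 2) := by
  have h (i : ℕ) : (trunc n x i - trunc m x i) ^ 2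
      = (if i < n then x i ^ 2 else 0) - (if i < m then x i ^ 2 else 0) := by
    unfold trunc; split_ifs <;> first | omega | ring
  simpa only [h] using (hasSum_ite_lt (fun i => x i ^ 2) n).sub (hasSum_ite_lt _ m)

lemma hasSum_sq_sub_trunc {x : ℕ → ℝ} (hx : Memℓ2 x) (n : ℕ) :
    HasSum (fun i => (x i - trunc n x i) ^ 2) (∑' i, x i ^ 2 - ∑ i ∈ range n, x i ^ 2) := by
  have h (i : ℕ) : (x i - trunc n x i) ^ 2 = x i ^ 2 - (if i < n then x i ^ 2 else 0) := by
    unfold trunc; split_ifs <;> ring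
  simpa only [h] using hx.hasSum.sub (hasSum_ite_lt (fun i => x i ^ 2) n)

lemma tendsto_tsum_sq_sub_trunc {x : ℕ → ℝ} (hx : Memℓ2 x) :
    Tendsto (fun n => ∑' i, (x i - trunc n x i) ^ 2) atTop (𝓝 0) := by
  simp_rw [(hasSum_sq_sub_trunc hx _).tsum_eq]
  rw [← sub_self (∑' i, x i ^ 2)]
  exact hx.hasSum.tendsto_sum_nat.const_sub _

lemma hasSum_tsum_sq_trunc_sub_trunc {x : ℕ → ℝ} (hx : Memℓ2 x) {a : ℕ → ℕ} (ha : Monotone a)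
    (ha' : Tendsto a atTop atTop) :
    HasSum (fun k => ∑' i, (trunc (a (k + 1)) x i - trunc (a k) x i) ^ 2)
      (∑' i, (x i - trunc (a 0) x i) ^ 2) := by
  have hblock (k : ℕ) := hasSum_sq_trunc_sub_trunc x (ha k.le_succ)
  rw [hasSum_iff_tendsto_nat_of_nonneg fun k => tsum_nonneg fun _ => sq_nonneg _]
  simp_rw [fun k => (hblock k).tsum_eq, (hasSum_sq_sub_trunc hx _).tsum_eq,
    sum_range_sub (fun k => ∑ i ∈ range (a k), x i ^ 2)]
  exact (hx.hasSum.tendsto_sum_nat.comp ha').sub_const _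

lemma LowerTri.diag_ne_zero {L Linv : Mat} (hL : LowerTri L) (hLinv : LowerTri Linv)
    (h : ∀ p q, (∑' r, L p r * Linv r q) = idMat p q) (p : ℕ) : L p p ≠ 0 := by
  intro h0
  have hpp := h p p
  rw [tsum_eq_single p fun r hr => ?_, h0, zero_mul] at hpp
  · simp [idMat] at hpp
  · rcases hr.lt_or_gt with hr | hr
    · rw [hLinv r p hr, mul_zero]
    · rw [hL p r hr, zero_mul]

lemma eq_of_sum_range_succ_mul_eq {L : Mat} (hdiag : ∀ p, L p p ≠ 0) {z w : ℕ → ℝ} {n : ℕ}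
    (h : ∀ i < n, ∑ r ∈ range (i + 1), L i r * z r = ∑ r ∈ range (i + 1), L i r * w r) :
    ∀ i < n, z i = w i := by
  intro i
  induction i using Nat.strong_induction_on with
  | _ i ih =>
    intro hi
    have hlow : ∑ r ∈ range i, L i r * z r = ∑ r ∈ range i, L i r * w r :=
      sum_congr rfl fun r hr => by rw [ih r (mem_range.1 hr) ((mem_range.1 hr).trans hi)]
    have hsum := h i hi
    rw [sum_range_succ, sum_range_succ, hlow, add_right_inj] at hsum
    exact mul_left_cancel₀ (hdiag i) hsum

lemma mulVec_eq_sum_mul_mulVec {M L U : Mat} (hL : LowerTri L)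
    (hLU : ∀ p q, M p q = ∑' r, L p r * U r q) {x : ℕ → ℝ}
    (hx : ∀ r, Summable fun j => U r j * x j) (i : ℕ) :
    mulVec M x i = ∑ r ∈ range (i + 1), L i r * mulVec U x r := by
  have hrow (j : ℕ) : M i j * x j = ∑ r ∈ range (i + 1), L i r * (U r j * x j) := by
    rw [hLU, tsum_eq_sum (s := range (i + 1)) fun r hr => by
      rw [hL i r (by simpa using hr), zero_mul], sum_mul]
    exact sum_congr rfl fun r _ => mul_assoc _ _ _
  simp only [mulVec, hrow]
  rw [Summable.tsum_finsetSum fun r _ => (hx r).mul_left _]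
  simp only [tsum_mul_left]

lemma mulVec_eq_sum_range {M : Mat} {x : ℕ → ℝ} {n : ℕ} (hx : ∀ j, n ≤ j → x j = 0) (i : ℕ) :
    mulVec M x i = ∑ j ∈ range n, M i j * x j :=
  tsum_eq_sum fun j hj => by rw [hx j (by simpa using hj), mul_zero]

lemma UpperTri.mulVec_eq_zero {U : Mat} (hU : UpperTri U) {x : ℕ → ℝ} {n : ℕ}
    (hx : ∀ j, n ≤ j → x j = 0) {i : ℕ} (hi : n ≤ i) : mulVec U x i = 0 := by
  refine (tsum_congr fun j => ?_).trans tsum_zero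
  rcases lt_or_ge j i with hj | hj
  · rw [hU i j hj, zero_mul]
  · rw [hx j (hi.trans hj), mul_zero]

lemma UpperTri.mulVec_mulVec_eq_self_of_support {U Uinv : Mat} (hU : UpperTri U)
    (hUinvU : ∀ p q, (∑' r, Uinv p r * U r q) = idMat p q) {x : ℕ → ℝ} {n : ℕ}
    (hx : ∀ j, n ≤ j → x j = 0) : mulVec Uinv (mulVec U x) = x := by
  have hcol (i r : ℕ) (hr : r < n) : ∑ j ∈ range n, Uinv i j * U j r = idMat i r := by
    rw [← hUinvU]
    exact (tsum_eq_sum fun j hj => by rw [hU j r (hr.trans_le (by simpa using hj)), mul_zero]).symm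
  funext i
  rw [mulVec_eq_sum_range fun j hj => hU.mulVec_eq_zero hx hj]
  simp_rw [mulVec_eq_sum_range hx, mul_sum]
  rw [sum_comm]
  calc ∑ r ∈ range n, ∑ j ∈ range n, Uinv i j * (U j r * x r)
      = ∑ r ∈ range n, idMat i r * x r := sum_congr rfl fun r hr => by
        rw [← hcol i r (mem_range.1 hr), sum_mul]
        simp only [mul_assoc]
    _ = x i := by
      simp only [idMat, ite_mul, one_mul, zero_mul, sum_ite_eq, mem_range]
      split_ifs with hi
      · rfl
      · exact (hx i (not_lt.1 hi)).symm

lemma UpperTri.mulVec_mulVec_eq_self {U Uinv : Mat} (hU : UpperTri U)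
    (hUinvU : ∀ p q, (∑' r, Uinv p r * U r q) = idMat p q) (hUb : IsBoundedOp U)
    (hUinvb : IsBoundedOp Uinv) {x : ℕ → ℝ} (hx : Memℓ2 x) : mulVec Uinv (mulVec U x) = x := by
  -- `U⁻¹U = I` is exact on truncations of `x`; the truncation errors tend to `0` in `ℓ²`.
  funext i
  set K := opNorm Uinv ^ 2 * opNorm U ^ 2
  have hbound (n : ℕ) (hin : i < n) :
      (mulVec Uinv (mulVec U x) i - x i) ^ 2 ≤ K * ∑' j, (x j - trunc n x j) ^ 2 := by
    have hz : Memℓ2 fun j => x j - trunc n x j := (hasSum_sq_sub_trunc hx n).summable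
    have htrunc := memℓ2_trunc n x
    have hsplit : mulVec Uinv (mulVec U x) i - x i
        = mulVec Uinv (mulVec U fun j => x j - trunc n x j) i := by
      rw [hUb.mulVec_sub hx htrunc, hUinvb.mulVec_sub (hUb.memℓ2_mulVec hx)
        (hUb.memℓ2_mulVec htrunc), hU.mulVec_mulVec_eq_self_of_support hUinvU (x := trunc n x)
        (n := n) fun j hj => if_neg hj.not_gt]
      simp [trunc, hin]
    rw [hsplit, mul_assoc]
    exact (hUinvb.sq_mulVec_apply_le (hUb.memℓ2_mulVec hz) i).trans
      (mul_le_mul_of_nonneg_left (hUb.tsum_sq_mulVec_le hz) (sq_nonneg _))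
  have hlim : Tendsto (fun n => K * ∑' j, (x j - trunc n x j) ^ 2) atTop (𝓝 0) := by
    simpa using (tendsto_tsum_sq_sub_trunc hx).const_mul K
  have hsq : (mulVec Uinv (mulVec U x) i - x i) ^ 2 ≤ 0 :=
    ge_of_tendsto hlim ((eventually_gt_atTop i).mono hbound)
  exact sub_eq_zero.1 (pow_eq_zero_iff two_ne_zero |>.1 (le_antisymm hsq (sq_nonneg _)))

lemma UpperTri.tsum_sq_le_mul_tsum_sq_mulVec {U Uinv : Mat} (hU : UpperTri U)
    (hUinvU : ∀ p q, (∑' r, Uinv p r * U r q) = idMat p q) (hUb : IsBoundedOp U)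
    (hUinvb : IsBoundedOp Uinv) {x : ℕ → ℝ} (hx : Memℓ2 x) :
    ∑' i, x i ^ 2 ≤ opNorm Uinv ^ 2 * ∑' i, mulVec U x i ^ 2 := by
  have h := hUinvb.tsum_sq_mulVec_le (hUb.memℓ2_mulVec hx)
  rwa [hU.mulVec_mulVec_eq_self hUinvU hUb hUinvb hx] at h

lemma summable_and_tsum_comparable_of_hasSum {A B : ℕ → ℝ} {E T a b : ℝ} (ha : 0 ≤ a)
    (hb : 0 ≤ b) (hA : ∀ k, 0 ≤ A k) (hB : HasSum B T) (hAB : ∀ k, A k ≤ b * B k)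
    (hBA : ∀ k, B k ≤ a * A k) (hET : E ≤ b * T) (hTE : T ≤ a * E) :
    Summable A ∧ (a * b)⁻¹ * E ≤ ∑' k, A k ∧ ∑' k, A k ≤ a * b * E := by
  have hAs : Summable A := .of_nonneg_of_le hA hAB (hB.summable.mul_left b)
  refine ⟨hAs, inv_mul_le_of_le_mul₀ (by positivity) (tsum_nonneg hA) ?_, ?_⟩
  · calc E ≤ b * ∑' k, B k := hB.tsum_eq ▸ hET
      _ ≤ b * ∑' k, a * A k :=
        mul_le_mul_of_nonneg_left (hB.summable.tsum_le_tsum hBA (hAs.mul_left a)) hb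
      _ = a * b * ∑' k, A k := by rw [tsum_mul_left]; ring
  · calc ∑' k, A k ≤ ∑' k, b * B k := hAs.tsum_le_tsum hAB (hB.summable.mul_left b)
      _ = b * T := by rw [tsum_mul_left, hB.tsum_eq]
      _ ≤ b * (a * E) := by gcongr
      _ = a * b * E := by ring

theorem LU_telescoping_quasi_orthogonality_general
    (M L U Linv Uinv : Mat)
    (hL : LowerTri L) (hU : UpperTri U)
    (hLU : ∀ p q, M p q = ∑' r, L p r * U r q)
    (hLinvT : LowerTri Linv)
    (hLLinv : ∀ p q, (∑' r, L p r * Linv r q) = idMat p q)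
    (hUinvU : ∀ p q, (∑' r, Uinv p r * U r q) = idMat p q)
    (hUb : IsBoundedOp U) (hUinvb : IsBoundedOp Uinv)
    (F : ℕ → ℝ)
    (lam : ℕ → ℝ) (hlam : Memℓ2 lam) (hlamsol : mulVec M lam = F)
    (N : ℕ → ℕ) (hN : StrictMono N)
    (lamh : ℕ → ℕ → ℝ) (hlamh2 : ∀ ℓ, Memℓ2 (lamh ℓ))
    (hlamh0 : ∀ ℓ i, N ℓ ≤ i → lamh ℓ i = 0)
    (hlamhsol : ∀ ℓ i, i < N ℓ → mulVec M (lamh ℓ) i = F i) :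
    (∀ ℓ i, i < N ℓ → mulVec U (lamh ℓ) i = mulVec U lam i) ∧
    (∀ ℓ i, N ℓ ≤ i → mulVec U (lamh ℓ) i = 0) ∧
    ∀ ℓ : ℕ,
      (Summable fun k => ∑' i, (lamh (ℓ + k + 1) i - lamh (ℓ + k) i) ^ 2) ∧
      ((opNorm U * opNorm Uinv) ^ 2)⁻¹ * (∑' i, (lam i - lamh ℓ i) ^ 2)
        ≤ (∑' k, ∑' i, (lamh (ℓ + k + 1) i - lamh (ℓ + k) i) ^ 2) ∧
      (∑' k, ∑' i, (lamh (ℓ + k + 1) i - lamh (ℓ + k) i) ^ 2)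
        ≤ (opNorm U * opNorm Uinv) ^ 2 * (∑' i, (lam i - lamh ℓ i) ^ 2) := by
  set y := mulVec U lam
  have hUlamh (ℓ : ℕ) : mulVec U (lamh ℓ) = trunc (N ℓ) y := by
    funext i
    unfold trunc
    split_ifs with hi
    · refine eq_of_sum_range_succ_mul_eq (hL.diag_ne_zero hLinvT hLLinv) (fun i hi => ?_) i hi
      rw [← mulVec_eq_sum_mul_mulVec hL hLU (hUb.summable_row (hlamh2 ℓ)),
        ← mulVec_eq_sum_mul_mulVec hL hLU (hUb.summable_row hlam), hlamhsol ℓ i hi, hlamsol]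
    · exact hU.mulVec_eq_zero (hlamh0 ℓ) (not_lt.1 hi)
  refine ⟨fun ℓ i hi => by simp [hUlamh, trunc, hi, y], fun ℓ i hi => by simp [hUlamh, trunc, hi],
    fun ℓ => ?_⟩
  have hdiff (m n : ℕ) := (hlamh2 m).sub (hlamh2 n)
  have herr := hlam.sub (hlamh2 ℓ)
  have hNℓ : StrictMono fun k => N (ℓ + k) := hN.comp fun _ _ h => by omega
  have hblocks := hasSum_tsum_sq_trunc_sub_trunc (hUb.memℓ2_mulVec hlam) hNℓ.monotone
    hNℓ.tendsto_atTop
  rw [mul_pow]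
  refine summable_and_tsum_comparable_of_hasSum (sq_nonneg _) (sq_nonneg _)
    (fun _ => tsum_nonneg fun _ => sq_nonneg _) ?_
    (fun k => hU.tsum_sq_le_mul_tsum_sq_mulVec hUinvU hUb hUinvb (hdiff _ _))
    (fun k => hUb.tsum_sq_mulVec_le (hdiff _ _))
    (hU.tsum_sq_le_mul_tsum_sq_mulVec hUinvU hUb hUinvb herr) (hUb.tsum_sq_mulVec_le herr)
  simp only [hUb.mulVec_sub hlam (hlamh2 _), hUb.mulVec_sub (hlamh2 _) (hlamh2 _), hUlamh]
  exact hblocks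

/-- telescoping quasi-orthogonality from a bounded LU-factorization.
If `M = LU` with bounded factors and bounded triangular inverses, `λ = M⁻¹F`, and
`λ(ℓ)` are the Galerkin solutions of level `ℓ`, then `Uλ(ℓ)` agrees with `Uλ` on the
first `N_ℓ` entries and vanishes beyond, and the telescoping sum of the increments is
two-sidedly comparable to the error, with constant `(‖U‖₂‖U⁻¹‖₂)²`. -/
theorem LU_telescoping_quasi_orthogonality
    (M L U Linv Uinv : Mat) (hMb : IsBoundedOp M)
    (hL : LowerTri L) (hU : UpperTri U)
    (hLU : ∀ p q, M p q = ∑' r, L p r * U r q)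
    (hLinvT : LowerTri Linv) (hUinvT : UpperTri Uinv)
    (hLLinv : ∀ p q, (∑' r, L p r * Linv r q) = idMat p q)
    (hLinvL : ∀ p q, (∑' r, Linv p r * L r q) = idMat p q)
    (hUUinv : ∀ p q, (∑' r, U p r * Uinv r q) = idMat p q)
    (hUinvU : ∀ p q, (∑' r, Uinv p r * U r q) = idMat p q)
    (hLb : IsBoundedOp L) (hUb : IsBoundedOp U)
    (hLinvb : IsBoundedOp Linv) (hUinvb : IsBoundedOp Uinv)
    (F : ℕ → ℝ) (hF : Memℓ2 F)
    (lam : ℕ → ℝ) (hlam : Memℓ2 lam) (hlamsol : mulVec M lam = F)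
    (N : ℕ → ℕ) (hN : StrictMono N)
    (lamh : ℕ → ℕ → ℝ) (hlamh2 : ∀ ℓ, Memℓ2 (lamh ℓ))
    (hlamh0 : ∀ ℓ i, N ℓ ≤ i → lamh ℓ i = 0)
    (hlamhsol : ∀ ℓ i, i < N ℓ → mulVec M (lamh ℓ) i = F i) :
    (∀ ℓ i, i < N ℓ → mulVec U (lamh ℓ) i = mulVec U lam i) ∧
    (∀ ℓ i, N ℓ ≤ i → mulVec U (lamh ℓ) i = 0) ∧
    ∀ ℓ : ℕ,
      (Summable fun k => ∑' i, (lamh (ℓ + k + 1) i - lamh (ℓ + k) i) ^ 2) ∧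
      ((opNorm U * opNorm Uinv) ^ 2)⁻¹ * (∑' i, (lam i - lamh ℓ i) ^ 2)
        ≤ (∑' k, ∑' i, (lamh (ℓ + k + 1) i - lamh (ℓ + k) i) ^ 2) ∧
      (∑' k, ∑' i, (lamh (ℓ + k + 1) i - lamh (ℓ + k) i) ^ 2)
        ≤ (opNorm U * opNorm Uinv) ^ 2 * (∑' i, (lam i - lamh ℓ i) ^ 2) :=
  LU_telescoping_quasi_orthogonality_general M L U Linv Uinv hL hU hLU hLinvT hLLinv hUinvU hUb
    hUinvb F lam hlam hlamsol N hN lamh hlamh2 hlamh0 hlamhsol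
end

section
/- Let M : ℕ × ℕ → ℝ carry a block structure and suppose M = LU entrywise, where L is block-lower triangular with unit diagonal blocks L(i,i) = I and U is block-upper triangular admitting a block-upper triangular two-sided entrywise inverse U⁻¹ (all occurring entrywise products being finite sums by triangularity). Then every finite section M[k] = L[k]U[k] is invertible, and for every k ∈ ℕ and every block index 1 ≤ i ≤ k, the (i,k) block of the inverse of the finite section equals the corresponding block of U⁻¹: (M[k]⁻¹)(i,k) = U⁻¹(i,k). -/
def IsBlockStructure (n : ℕ → ℕ) : Prop := StrictMono n ∧ n 0 = 0

def InBlock (n : ℕ → ℕ) (i p : ℕ) : Prop := n i ≤ p ∧ p < n (i + 1)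

def BlockLower (n : ℕ → ℕ) (M : Mat) : Prop :=
  ∀ i j p q, InBlock n i p → InBlock n j q → i < j → M p q = 0

def BlockUpper (n : ℕ → ℕ) (M : Mat) : Prop :=
  ∀ i j p q, InBlock n i p → InBlock n j q → j < i → M p q = 0

def UnitDiagBlocks (n : ℕ → ℕ) (M : Mat) : Prop :=
  ∀ i p q, InBlock n i p → InBlock n i q → M p q = idMat p q

/-!
Truncating a product to its first `N = n (k + 1)` indices commutes with the product
as soon as the factor on the side of the summation index is block triangular in the right
direction, so `M[k] = L[k] U[k]` and `U⁻¹[k] U[k] = 1`. The section `L[k]` is lower triangular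
with unit diagonal, hence invertible, so `M[k]` is invertible with `M[k]⁻¹ L[k] = U⁻¹[k]`.
Finally every column of `L[k]` indexed by the last block is a standard basis vector, so
multiplying by `L[k]` on the right does not change the last block column.
-/

section Blocks

variable {n : ℕ → ℕ} {i j m p q : ℕ}

theorem IsBlockStructure.exists_inBlock (hn : IsBlockStructure n) (p : ℕ) :
    ∃ i, InBlock n i p := by
  have hex : ∃ j, p < n (j + 1) := ⟨p, (Nat.lt_succ_self p).trans_le hn.1.le_apply⟩
  refine ⟨Nat.find hex, ?_, Nat.find_spec hex⟩
  cases h : Nat.find hex with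
  | zero => simp [hn.2]
  | succ j => exact not_lt.1 (Nat.find_min hex (by omega))

theorem InBlock.lt_of_lt_apply (hn : StrictMono n) (hp : InBlock n i p) (h : p < n m) :
    i < m :=
  hn.lt_iff_lt.1 (hp.1.trans_lt h)

theorem InBlock.le_of_apply_le (hn : StrictMono n) (hp : InBlock n i p) (h : n m ≤ p) :
    m ≤ i :=
  Nat.lt_succ_iff.1 (hn.lt_iff_lt.1 (h.trans_lt hp.2))

theorem InBlock.le_of_le (hn : StrictMono n) (hp : InBlock n i p) (hq : InBlock n j q)
    (h : p ≤ q) : i ≤ j :=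
  Nat.lt_succ_iff.1 (hp.lt_of_lt_apply hn (h.trans_lt hq.2))

theorem BlockLower.apply_eq_zero_of_lt_of_le {L : Mat} (hn : IsBlockStructure n)
    (hL : BlockLower n L) (hp : p < n m) (hq : n m ≤ q) : L p q = 0 := by
  obtain ⟨i, hi⟩ := hn.exists_inBlock p
  obtain ⟨j, hj⟩ := hn.exists_inBlock q
  exact hL i j p q hi hj ((hi.lt_of_lt_apply hn.1 hp).trans_le (hj.le_of_apply_le hn.1 hq))

theorem BlockUpper.apply_eq_zero_of_le_of_lt {U : Mat} (hn : IsBlockStructure n)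
    (hU : BlockUpper n U) (hp : n m ≤ p) (hq : q < n m) : U p q = 0 := by
  obtain ⟨i, hi⟩ := hn.exists_inBlock p
  obtain ⟨j, hj⟩ := hn.exists_inBlock q
  exact hU i j p q hi hj ((hj.lt_of_lt_apply hn.1 hq).trans_le (hi.le_of_apply_le hn.1 hp))

theorem BlockLower.apply_eq_idMat {L : Mat} (hn : StrictMono n) (hL : BlockLower n L)
    (hLd : UnitDiagBlocks n L) (hp : InBlock n i p) (hq : InBlock n j q) (hij : i ≤ j) :
    L p q = idMat p q := by
  rcases hij.lt_or_eq with hij | rfl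
  · have hpq : p ≠ q := (hp.2.trans_le ((hn.monotone hij).trans hq.1)).ne
    rw [hL i j p q hp hq hij, idMat, if_neg hpq]
  · exact hLd i p q hp hq

theorem BlockLower.apply_eq_zero_of_lt {L : Mat} (hn : IsBlockStructure n)
    (hL : BlockLower n L) (hLd : UnitDiagBlocks n L) (hpq : p < q) : L p q = 0 := by
  obtain ⟨i, hi⟩ := hn.exists_inBlock p
  obtain ⟨j, hj⟩ := hn.exists_inBlock q
  rw [hL.apply_eq_idMat hn.1 hLd hi hj (hi.le_of_le hn.1 hj hpq.le), idMat, if_neg hpq.ne]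

theorem UnitDiagBlocks.apply_self {L : Mat} (hn : IsBlockStructure n)
    (hLd : UnitDiagBlocks n L) (p : ℕ) : L p p = 1 := by
  obtain ⟨i, hi⟩ := hn.exists_inBlock p
  rw [hLd i p p hi hi, idMat, if_pos rfl]

end Blocks

theorem sect_idMat (N : ℕ) : sect idMat N = 1 := by
  ext p q
  simp [sect, idMat, Matrix.one_apply, Fin.ext_iff]

theorem sect_tsum_mul (A B : Mat) (N : ℕ)
    (h : ∀ p q r, p < N → q < N → N ≤ r → A p r * B r q = 0) :
    sect (fun p q => ∑' r, A p r * B r q) N = sect A N * sect B N := by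
  ext p q
  have hvanish : ∀ r ∉ Finset.range N, A p r * B r q = 0 := fun r hr =>
    h p q r p.2 q.2 (not_lt.1 (Finset.mem_range.not.1 hr))
  simp only [sect, Matrix.mul_apply, Matrix.of_apply]
  rw [tsum_eq_sum hvanish, ← Fin.sum_univ_eq_sum_range]

theorem det_sect_eq_one {n : ℕ → ℕ} {L : Mat} (hn : IsBlockStructure n) (hL : BlockLower n L)
    (hLd : UnitDiagBlocks n L) (N : ℕ) : (sect L N).det = 1 := by
  have htri : (sect L N).IsLowerTriangular := fun p q hpq =>
    hL.apply_eq_zero_of_lt hn hLd (show (p : ℕ) < q from hpq)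
  rw [Matrix.det_of_isLowerTriangular _ htri]
  simp [sect, hLd.apply_self hn]

theorem sect_apply_last_block_column {n : ℕ → ℕ} {L : Mat} (hn : IsBlockStructure n)
    (hL : BlockLower n L) (hLd : UnitDiagBlocks n L) {k : ℕ} (r q : Fin (n (k + 1)))
    (hq : n k ≤ q) : sect L (n (k + 1)) r q = (1 : Matrix _ _ ℝ) r q := by
  obtain ⟨i, hi⟩ := hn.exists_inBlock r
  have hrq : L r q = idMat r q :=
    hL.apply_eq_idMat hn.1 hLd hi ⟨hq, q.2⟩ (Nat.lt_succ_iff.1 (hi.lt_of_lt_apply hn.1 r.2))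
  rw [← sect_idMat]
  exact hrq

theorem Matrix.mul_apply_of_col_eq_one {ι R : Type*} [Fintype ι] [DecidableEq ι] [Semiring R]
    (X L : Matrix ι ι R) {j : ι} (hL : ∀ i, L i j = (1 : Matrix ι ι R) i j) (i : ι) :
    (X * L) i j = X i j := by
  simp only [Matrix.mul_apply, hL]
  rw [← Matrix.mul_apply, Matrix.mul_one]

theorem Matrix.isUnit_and_inv_mul_eq_of_eq_mul {ι K : Type*} [Fintype ι] [DecidableEq ι]
    [Field K] {A L U V : Matrix ι ι K} (hA : A = L * U) (hL : IsUnit L.det) (hVU : V * U = 1) :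
    IsUnit A ∧ A⁻¹ * L = V := by
  have hU : IsUnit U := (Matrix.isUnit_iff_isUnit_det U).2 (Matrix.isUnit_det_of_left_inverse hVU)
  refine ⟨hA ▸ ((Matrix.isUnit_iff_isUnit_det L).2 hL).mul hU, ?_⟩
  rw [hA, Matrix.mul_inv_rev, Matrix.inv_eq_left_inv hVU, Matrix.mul_assoc,
    Matrix.nonsing_inv_mul L hL, Matrix.mul_one]

theorem section_inverse_last_block_column_general
    (nseq : ℕ → ℕ) (hn : IsBlockStructure nseq)
    (M L U Uinv : Mat)
    (hL : BlockLower nseq L) (hLd : UnitDiagBlocks nseq L)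
    (hU : BlockUpper nseq U)
    (hLU : ∀ p q, M p q = ∑' r, L p r * U r q)
    (hUinvU : ∀ p q, (∑' r, Uinv p r * U r q) = idMat p q) :
    ∀ k : ℕ, IsUnit (sect M (nseq (k + 1))) ∧
      ∀ (p q : ℕ) (hp : p < nseq (k + 1)) (_ : nseq k ≤ q) (hq : q < nseq (k + 1)),
        (sect M (nseq (k + 1)))⁻¹ ⟨p, hp⟩ ⟨q, hq⟩ = Uinv p q := by
  intro k
  have hM : sect M (nseq (k + 1)) = sect L (nseq (k + 1)) * sect U (nseq (k + 1)) := by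
    rw [← sect_tsum_mul, ← funext₂ hLU]
    intro p q r hp _ hr
    rw [hL.apply_eq_zero_of_lt_of_le hn hp hr, zero_mul]
  have hVU : sect Uinv (nseq (k + 1)) * sect U (nseq (k + 1)) = 1 := by
    rw [← sect_tsum_mul, funext₂ hUinvU, sect_idMat]
    intro p q r _ hq hr
    rw [hU.apply_eq_zero_of_le_of_lt hn hr hq, mul_zero]
  obtain ⟨hunit, hinv⟩ := Matrix.isUnit_and_inv_mul_eq_of_eq_mul hM
    (by rw [det_sect_eq_one hn hL hLd]; exact isUnit_one) hVU
  refine ⟨hunit, fun p q hp hqk hq => ?_⟩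
  rw [← Matrix.mul_apply_of_col_eq_one (sect M (nseq (k + 1)))⁻¹ _
    (fun r => sect_apply_last_block_column hn hL hLd r ⟨q, hq⟩ hqk), hinv]
  rfl

/-- if `M = LU` with `L` block-lower triangular with unit diagonal
blocks and `U` block-upper triangular with block-upper triangular two-sided inverse
`U⁻¹`, then every finite section `M[k]` (the first `k+1` blocks) is invertible and the
blocks `(M[k]⁻¹)(i,k)` of the last block column of its inverse coincide with those of
`U⁻¹`. -/
theorem section_inverse_last_block_column
    (nseq : ℕ → ℕ) (hn : IsBlockStructure nseq)
    (M L U Uinv : Mat)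
    (hL : BlockLower nseq L) (hLd : UnitDiagBlocks nseq L)
    (hU : BlockUpper nseq U) (hUinvT : BlockUpper nseq Uinv)
    (hLU : ∀ p q, M p q = ∑' r, L p r * U r q)
    (hUUinv : ∀ p q, (∑' r, U p r * Uinv r q) = idMat p q)
    (hUinvU : ∀ p q, (∑' r, Uinv p r * U r q) = idMat p q) :
    ∀ k : ℕ, IsUnit (sect M (nseq (k + 1))) ∧
      ∀ (p q : ℕ) (hp : p < nseq (k + 1)) (_ : nseq k ≤ q) (hq : q < nseq (k + 1)),
        (sect M (nseq (k + 1)))⁻¹ ⟨p, hp⟩ ⟨q, hq⟩ = Uinv p q :=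
  section_inverse_last_block_column_general nseq hn M L U Uinv hL hLd hU hLU hUinvU
end
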